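/- arXiv:1102.0681 — 5 statements merged into one kernel-verified Lean document; each statement's English description precedes it below -/
import Mathlib

section
/- Let 0 < p₁ ≤ p₂ ≤ 2 or 2 ≤ p₁ ≤ p₂ ≤ ∞. Then there exist constants C ≥ c > 0 (depending only on p₁, p₂) such that for all N ∈ ℕ and all k ∈ ℕ with k ≤ N/4, one has c ≤ a_k(id : ℓ_{p₁}^N → ℓ_{p₂}^N) ≤ C. -/
open scoped ENNReal

/-- The `ℓ_p` (quasi-)norm on `ℝ^N`: `(∑ i |x i|^p)^{1/p}` for `p < ∞`,
and `max_i |x i|` for `p = ∞`. -/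
noncomputable def lpnorm (p : ℝ≥0∞) {N : ℕ} (x : Fin N → ℝ) : ℝ :=
  if p = ∞ then ⨆ i, |x i| else (∑ i, |x i| ^ p.toReal) ^ (1 / p.toReal)

/-- The `k`-th approximation number of the identity map `id : ℓ_{p₁}^N → ℓ_{p₂}^N`:
`inf { sup_{‖x‖_{p₁} ≤ 1} ‖x - A x‖_{p₂} : A linear, rank A < k }`. -/
noncomputable def approxNumId (p₁ p₂ : ℝ≥0∞) (N k : ℕ) : ℝ :=
  sInf {r : ℝ | ∃ A : (Fin N → ℝ) →ₗ[ℝ] (Fin N → ℝ),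
    Module.rank ℝ (LinearMap.range A) < k ∧
    r = sSup {c : ℝ | ∃ x : Fin N → ℝ, lpnorm p₁ x ≤ 1 ∧ c = lpnorm p₂ (x - A x)}}

/-!
The upper bound `1` is attained by `A = 0`, since `‖x‖_{p₂} ≤ ‖x‖_{p₁}` for `p₁ ≤ p₂`.

For the lower bound `1/2`, let `B = 1 - A` as a matrix. `B` fixes `ker A`, of dimension
`N - rank A > 3N/4`, so Bessel's inequality applied to the rows of `B` and an orthonormal basis
of `ker A` gives `∑ᵢⱼ Bᵢⱼ² ≥ N - rank A`. Hence some column and some row of `B` has `ℓ₂` norm at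
least `1/2`. If `p₂ ≤ 2`, test `id - A` on the corresponding unit vector `eⱼ`; if `2 ≤ p₁`, on the
normalized row `r / ‖r‖₂`, which lies in the `ℓ_{p₁}` unit ball and is mapped to a vector whose
`i`-th coordinate is `‖r‖₂`.
-/

open Finset Module Matrix

theorem Real.sum_rpow_le_rpow_sum {ι : Type*} (s : Finset ι) {f : ι → ℝ} (hf : ∀ i ∈ s, 0 ≤ f i)
    {r : ℝ} (hr : 1 ≤ r) : ∑ i ∈ s, f i ^ r ≤ (∑ i ∈ s, f i) ^ r := by
  classical
  induction s using Finset.induction_on with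
  | empty => simp [Real.zero_rpow (by linarith : r ≠ 0)]
  | insert a s ha ih =>
    rw [sum_insert ha, sum_insert ha]
    have hs : ∀ i ∈ s, 0 ≤ f i := fun i hi => hf i (mem_insert_of_mem hi)
    exact (add_le_add le_rfl (ih hs)).trans
      (Real.add_rpow_le_rpow_add (hf a (mem_insert_self a s)) (sum_nonneg hs) hr)

section lpnorm

variable {N : ℕ} {p q : ℝ≥0∞}

theorem lpnorm_nonneg (p : ℝ≥0∞) (x : Fin N → ℝ) : 0 ≤ lpnorm p x := by
  unfold lpnorm
  split_ifs
  · exact Real.iSup_nonneg fun i => abs_nonneg (x i)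
  · positivity

theorem abs_le_lpnorm (hp : p ≠ 0) (x : Fin N → ℝ) (i : Fin N) : |x i| ≤ lpnorm p x := by
  unfold lpnorm
  split_ifs with hp'
  · exact le_ciSup (f := fun j => |x j|) (Set.finite_range _).bddAbove i
  · have hpt : 0 < p.toReal := ENNReal.toReal_pos hp hp'
    calc |x i| = (|x i| ^ p.toReal) ^ (1 / p.toReal) := by
          rw [← Real.rpow_mul (abs_nonneg _), mul_one_div_cancel hpt.ne', Real.rpow_one]
      _ ≤ _ := by
          gcongr
          exact single_le_sum (f := fun j => |x j| ^ p.toReal) (fun j _ => by positivity)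
            (mem_univ i)

theorem lpnorm_le_lpnorm_of_abs_le {x y : Fin N → ℝ} (h : ∀ i, |x i| ≤ |y i|) :
    lpnorm p x ≤ lpnorm p y := by
  unfold lpnorm
  split_ifs
  · exact Real.iSup_le
      (fun i => (h i).trans (le_ciSup (f := fun j => |y j|) (Set.finite_range _).bddAbove i))
      (Real.iSup_nonneg fun i => abs_nonneg (y i))
  · gcongr (∑ i, ?_ ^ _) ^ _ with i
    exact h i

theorem lpnorm_le_lpnorm_of_le (hp : p ≠ 0) (hpq : p ≤ q) (x : Fin N → ℝ) :
    lpnorm q x ≤ lpnorm p x := by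
  rcases eq_or_ne q ∞ with rfl | hq
  · rw [lpnorm, if_pos rfl]
    exact Real.iSup_le (abs_le_lpnorm hp x) (lpnorm_nonneg p x)
  have hp' : p ≠ ∞ := ne_top_of_le_ne_top hq hpq
  have hpt : 0 < p.toReal := ENNReal.toReal_pos hp hp'
  have hpq' : p.toReal ≤ q.toReal := (ENNReal.toReal_le_toReal hp' hq).2 hpq
  have hqt : 0 < q.toReal := hpt.trans_le hpq'
  have hpow : ∀ i, |x i| ^ q.toReal = (|x i| ^ p.toReal) ^ (q.toReal / p.toReal) := fun i => by
    rw [← Real.rpow_mul (abs_nonneg _), mul_div_cancel₀ _ hpt.ne']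
  unfold lpnorm
  rw [if_neg hq, if_neg hp']
  calc (∑ i, |x i| ^ q.toReal) ^ (1 / q.toReal)
      ≤ ((∑ i, |x i| ^ p.toReal) ^ (q.toReal / p.toReal)) ^ (1 / q.toReal) := by
        simp_rw [hpow]
        gcongr
        exact Real.sum_rpow_le_rpow_sum _ (fun i _ => by positivity)
          ((one_le_div hpt).2 hpq')
    _ = (∑ i, |x i| ^ p.toReal) ^ (1 / p.toReal) := by
        rw [← Real.rpow_mul (by positivity)]
        congr 1
        field_simp

theorem lpnorm_zero (hp : p ≠ 0) : lpnorm p (0 : Fin N → ℝ) = 0 := by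
  unfold lpnorm
  split_ifs with hp'
  · simp
  · have hpt : 0 < p.toReal := ENNReal.toReal_pos hp hp'
    simp [Real.zero_rpow hpt.ne', Real.zero_rpow (inv_ne_zero hpt.ne')]

theorem lpnorm_single (hp : p ≠ 0) (hp' : p ≠ ∞) (j : Fin N) :
    lpnorm p (Pi.single j (1 : ℝ)) = 1 := by
  have hpt : 0 < p.toReal := ENNReal.toReal_pos hp hp'
  rw [lpnorm, if_neg hp', sum_eq_single j (fun i _ hij => by simp [hij, hpt.ne']) (by simp)]
  simp

theorem lpnorm_two (x : Fin N → ℝ) : lpnorm 2 x = √(∑ i, x i ^ 2) := by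
  rw [lpnorm, if_neg ENNReal.ofNat_ne_top, Real.sqrt_eq_rpow]
  simp

end lpnorm

theorem finrank_le_sum_sq_of_mulVec_eq_self {ι : Type*} [Fintype ι] (M : Matrix ι ι ℝ)
    (K : Submodule ℝ (ι → ℝ)) (hK : ∀ x ∈ K, M *ᵥ x = x) :
    (finrank ℝ K : ℝ) ≤ ∑ i, ∑ j, M i j ^ 2 := by
  let K₂ := K.map (WithLp.linearEquiv 2 ℝ (ι → ℝ)).symm.toLinearMap
  have hK₂ : finrank ℝ K₂ = finrank ℝ K := LinearEquiv.finrank_map_eq _ K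
  let v : Fin (finrank ℝ K₂) → EuclideanSpace ℝ ι := fun l => stdOrthonormalBasis ℝ K₂ l
  have hv : Orthonormal ℝ v :=
    (stdOrthonormalBasis ℝ K₂).orthonormal.comp_linearIsometry K₂.subtypeₗᵢ
  let row : ι → EuclideanSpace ℝ ι := fun i => WithLp.toLp 2 (M i)
  have hinner : ∀ l i, inner ℝ (v l) (row i) = v l i := by
    intro l i
    have hmem : (v l).ofLp ∈ K := by
      obtain ⟨y, hy, hyv⟩ := (stdOrthonormalBasis ℝ K₂ l).2
      simpa [v, ← hyv] using hy
    conv_rhs => rw [← hK _ hmem]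
    simp [PiLp.inner_apply, mulVec, dotProduct, row]
  calc (finrank ℝ K : ℝ) = ∑ l, ‖v l‖ ^ 2 := by simp [hv.1, hK₂]
    _ = ∑ i, ∑ l, ‖inner ℝ (v l) (row i)‖ ^ 2 := by
      simp_rw [EuclideanSpace.norm_sq_eq, hinner]; exact sum_comm
    _ ≤ ∑ i, ‖row i‖ ^ 2 := sum_le_sum fun i _ => Orthonormal.sum_inner_products_le (row i) hv
    _ = ∑ i, ∑ j, M i j ^ 2 := by simp [EuclideanSpace.norm_sq_eq, row]

theorem LinearMap.sub_apply_eq_mulVec {ι : Type*} [Fintype ι] [DecidableEq ι]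
    (A : (ι → ℝ) →ₗ[ℝ] ι → ℝ) (x : ι → ℝ) :
    x - A x = (1 - LinearMap.toMatrix' A) *ᵥ x := by
  rw [sub_mulVec, one_mulVec, LinearMap.toMatrix'_mulVec]

theorem card_sub_finrank_range_le_sum_sq {ι : Type*} [Fintype ι] [DecidableEq ι]
    (A : (ι → ℝ) →ₗ[ℝ] ι → ℝ) :
    (Fintype.card ι : ℝ) - finrank ℝ (LinearMap.range A) ≤
      ∑ i, ∑ j, (1 - LinearMap.toMatrix' A) i j ^ 2 := by
  have hfix : ∀ x ∈ LinearMap.ker A, (1 - LinearMap.toMatrix' A) *ᵥ x = x := fun x hx => by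
    rw [← A.sub_apply_eq_mulVec, LinearMap.mem_ker.1 hx, sub_zero]
  have hrk := LinearMap.finrank_range_add_finrank_ker A
  rw [finrank_fintype_fun_eq_card] at hrk
  have := finrank_le_sum_sq_of_mulVec_eq_self _ _ hfix
  rw [← hrk]
  push_cast
  linarith

/-- The norm of `id - A` as a map `ℓ_{p₁}^N → ℓ_{p₂}^N`. -/
noncomputable def residualNorm (p₁ p₂ : ℝ≥0∞) {N : ℕ} (A : (Fin N → ℝ) →ₗ[ℝ] Fin N → ℝ) : ℝ :=
  sSup {c : ℝ | ∃ x : Fin N → ℝ, lpnorm p₁ x ≤ 1 ∧ c = lpnorm p₂ (x - A x)}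

section residualNorm

variable {p₁ p₂ : ℝ≥0∞} {N : ℕ} (A : (Fin N → ℝ) →ₗ[ℝ] Fin N → ℝ)

theorem bddAbove_residualNorm_set (hp₁ : p₁ ≠ 0) :
    BddAbove {c : ℝ | ∃ x : Fin N → ℝ, lpnorm p₁ x ≤ 1 ∧ c = lpnorm p₂ (x - A x)} := by
  set B := 1 - LinearMap.toMatrix' A
  refine ⟨lpnorm p₂ fun i => ∑ j, |B i j|, ?_⟩
  rintro _ ⟨x, hx, rfl⟩
  refine lpnorm_le_lpnorm_of_abs_le fun i => (?_ : _ ≤ ∑ j, |B i j|).trans (le_abs_self _)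
  rw [A.sub_apply_eq_mulVec]
  calc |∑ j, B i j * x j| ≤ ∑ j, |B i j * x j| := abs_sum_le_sum_abs _ _
    _ ≤ ∑ j, |B i j| := sum_le_sum fun j _ => by
      rw [abs_mul]
      exact mul_le_of_le_one_right (abs_nonneg _) ((abs_le_lpnorm hp₁ x j).trans hx)

variable {A}

theorem lpnorm_sub_le_residualNorm (hp₁ : p₁ ≠ 0) {x : Fin N → ℝ} (hx : lpnorm p₁ x ≤ 1) :
    lpnorm p₂ (x - A x) ≤ residualNorm p₁ p₂ A :=
  le_csSup (bddAbove_residualNorm_set A hp₁) ⟨x, hx, rfl⟩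

theorem residualNorm_nonneg (hp₁ : p₁ ≠ 0) : 0 ≤ residualNorm p₁ p₂ A :=
  (lpnorm_nonneg p₂ _).trans (lpnorm_sub_le_residualNorm hp₁ (x := 0) (by simp [lpnorm_zero hp₁]))

theorem residualNorm_zero_le_one (hp₁ : p₁ ≠ 0) (hp₁₂ : p₁ ≤ p₂) :
    residualNorm p₁ p₂ (0 : (Fin N → ℝ) →ₗ[ℝ] Fin N → ℝ) ≤ 1 := by
  refine csSup_le ⟨_, 0, by simp [lpnorm_zero hp₁], rfl⟩ ?_
  rintro _ ⟨x, hx, rfl⟩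
  simpa using (lpnorm_le_lpnorm_of_le hp₁ hp₁₂ x).trans hx

theorem sqrt_sum_sq_col_le_residualNorm (hp₁ : p₁ ≠ 0) (hp₁' : p₁ ≠ ∞) (hp₂ : p₂ ≠ 0)
    (hp₂' : p₂ ≤ 2) (j : Fin N) :
    √(∑ i, (1 - LinearMap.toMatrix' A) i j ^ 2) ≤ residualNorm p₁ p₂ A := by
  have hcol : Pi.single j 1 - A (Pi.single j 1) = (1 - LinearMap.toMatrix' A).col j := by
    rw [A.sub_apply_eq_mulVec, mulVec_single_one]
  calc √(∑ i, (1 - LinearMap.toMatrix' A) i j ^ 2)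
      = lpnorm 2 ((1 - LinearMap.toMatrix' A).col j) := (lpnorm_two _).symm
    _ ≤ lpnorm p₂ ((1 - LinearMap.toMatrix' A).col j) := lpnorm_le_lpnorm_of_le hp₂ hp₂' _
    _ ≤ residualNorm p₁ p₂ A :=
      hcol ▸ lpnorm_sub_le_residualNorm hp₁ (lpnorm_single hp₁ hp₁' j).le

theorem sqrt_sum_sq_row_le_residualNorm (hp₁ : 2 ≤ p₁) (hp₂ : p₂ ≠ 0) (i : Fin N) :
    √(∑ j, (1 - LinearMap.toMatrix' A) i j ^ 2) ≤ residualNorm p₁ p₂ A := by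
  have hp₁0 : p₁ ≠ 0 := (two_pos.trans_le hp₁).ne'
  set B := 1 - LinearMap.toMatrix' A
  set t := √(∑ j, B i j ^ 2)
  have ht2 : t ^ 2 = ∑ j, B i j ^ 2 := Real.sq_sqrt (by positivity)
  rcases (Real.sqrt_nonneg _ : 0 ≤ t).eq_or_lt with ht | ht
  · exact ht.ge.trans (residualNorm_nonneg hp₁0)
  let x : Fin N → ℝ := fun j => B i j / t
  have hx : lpnorm p₁ x ≤ 1 := by
    refine (lpnorm_le_lpnorm_of_le two_ne_zero hp₁ x).trans_eq ?_
    rw [lpnorm_two, Real.sqrt_eq_one]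
    simp only [x, div_pow, ← sum_div, ← ht2]
    exact div_self (by positivity)
  have hxi : (x - A x) i = t := by
    rw [A.sub_apply_eq_mulVec]
    change ∑ j, B i j * (B i j / t) = t
    simp only [mul_div_assoc', ← sq, ← sum_div, ← ht2]
    field_simp
  calc t = |(x - A x) i| := by rw [hxi, abs_of_pos ht]
    _ ≤ lpnorm p₂ (x - A x) := abs_le_lpnorm hp₂ _ i
    _ ≤ residualNorm p₁ p₂ A := lpnorm_sub_le_residualNorm hp₁0 hx

theorem half_le_residualNorm
    (h : (0 < p₁ ∧ p₁ ≤ p₂ ∧ p₂ ≤ 2) ∨ (2 ≤ p₁ ∧ p₁ ≤ p₂ ∧ p₂ ≤ ∞)) {k : ℕ}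
    (hA : Module.rank ℝ (LinearMap.range A) < k) (hkN : (k : ℝ) ≤ N / 4) :
    1 / 2 ≤ residualNorm p₁ p₂ A := by
  have hrk : finrank ℝ (LinearMap.range A) < k := by
    exact_mod_cast (finrank_eq_rank ℝ (LinearMap.range A)).symm ▸ hA
  have hN : (univ : Finset (Fin N)).Nonempty := by
    have hk : (0 : ℝ) < k := by exact_mod_cast (Nat.zero_le _).trans_lt hrk
    have hN : 0 < N := by exact_mod_cast (show (0 : ℝ) < N by linarith)
    exact ⟨⟨0, hN⟩, mem_univ _⟩
  have hF : ∑ _i : Fin N, (1 / 4 : ℝ) ≤ ∑ i, ∑ j, (1 - LinearMap.toMatrix' A) i j ^ 2 := by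
    have hfr : (finrank ℝ (LinearMap.range A) : ℝ) ≤ k := by exact_mod_cast hrk.le
    have hHS := card_sub_finrank_range_le_sum_sq A
    rw [Fintype.card_fin] at hHS
    rw [sum_const, card_univ, Fintype.card_fin, nsmul_eq_mul]
    linarith
  have half_le_sqrt : ∀ s : ℝ, 1 / 4 ≤ s → 1 / 2 ≤ √s := fun s hs =>
    Real.le_sqrt_of_sq_le (by linarith)
  rcases h with ⟨hp₁, hp₁₂, hp₂⟩ | ⟨hp₁, hp₁₂, -⟩
  · rw [sum_comm] at hF
    obtain ⟨j, -, hj⟩ := exists_le_of_sum_le hN hF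
    exact (half_le_sqrt _ hj).trans <| sqrt_sum_sq_col_le_residualNorm hp₁.ne'
      (ne_top_of_le_ne_top ENNReal.ofNat_ne_top (hp₁₂.trans hp₂)) (hp₁.trans_le hp₁₂).ne' hp₂ j
  · obtain ⟨i, -, hi⟩ := exists_le_of_sum_le hN hF
    exact (half_le_sqrt _ hi).trans <| sqrt_sum_sq_row_le_residualNorm hp₁
      (two_pos.trans_le (hp₁.trans hp₁₂)).ne' i

end residualNorm

/-- If `0 < p₁ ≤ p₂ ≤ 2` or `2 ≤ p₁ ≤ p₂ ≤ ∞`, then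
`a_k(id : ℓ_{p₁}^N → ℓ_{p₂}^N) ∼ 1` uniformly for `k ≤ N/4`. -/
theorem approx_number_id_finite_lp_one
    (p₁ p₂ : ℝ≥0∞)
    (h : (0 < p₁ ∧ p₁ ≤ p₂ ∧ p₂ ≤ 2) ∨ (2 ≤ p₁ ∧ p₁ ≤ p₂ ∧ p₂ ≤ ∞)) :
    ∃ c C : ℝ, 0 < c ∧ c ≤ C ∧
      ∀ N k : ℕ, 1 ≤ k → (k : ℝ) ≤ (N : ℝ) / 4 →
        c ≤ approxNumId p₁ p₂ N k ∧ approxNumId p₁ p₂ N k ≤ C := by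
  obtain ⟨hp₁, hp₁₂⟩ : p₁ ≠ 0 ∧ p₁ ≤ p₂ := by
    rcases h with ⟨hp₁, hp₁₂, -⟩ | ⟨hp₁, hp₁₂, -⟩
    exacts [⟨hp₁.ne', hp₁₂⟩, ⟨(two_pos.trans_le hp₁).ne', hp₁₂⟩]
  refine ⟨1 / 2, 1, by norm_num, by norm_num, fun N k hk hkN => ?_⟩
  let S : Set ℝ := {r | ∃ A : (Fin N → ℝ) →ₗ[ℝ] (Fin N → ℝ),
    Module.rank ℝ (LinearMap.range A) < k ∧ r = residualNorm p₁ p₂ A}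
  change 1 / 2 ≤ sInf S ∧ sInf S ≤ 1
  have hzero : residualNorm p₁ p₂ (0 : (Fin N → ℝ) →ₗ[ℝ] Fin N → ℝ) ∈ S :=
    ⟨0, by simpa [Nat.pos_iff_ne_zero, Nat.one_le_iff_ne_zero] using hk, rfl⟩
  have hlower : ∀ r ∈ S, 1 / 2 ≤ r := by
    rintro _ ⟨A, hA, rfl⟩
    exact half_le_residualNorm h hA hkN
  exact ⟨le_csInf ⟨_, hzero⟩ hlower,
    (csInf_le ⟨_, hlower⟩ hzero).trans (residualNorm_zero_le_one hp₁ hp₁₂)⟩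
end

section
/- Let 0 < p ≤ 1. Then there exists a constant C > 0, independent of k, such that for all k ∈ ℕ with k ≥ 1, a_k(id : ℓ_p^{2k} → ℓ_∞^{2k}) ≥ C · k^{−1/2}. -/
/-!
Let `A` have rank `r < k` on `ℝ^N`, `N = 2k`, and let `m = maxᵢ ‖eᵢ - A eᵢ‖_∞`. Each `eᵢ` lies
in the unit ball of `ℓ_p^N`, so `a_k ≥ m`. The diagonal entries of `A` are at least `1 - m`, so
`tr A ≥ N (1 - m)`, while its columns have Euclidean length at most `1 + √N m`. Projecting
orthogonally onto the range of `A` and applying Cauchy–Schwarz gives the rank inequality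
`tr A ≤ √r ‖A‖_HS ≤ √r √N (1 + √N m)`, and with `N = 2k`, `r ≤ k` this forces `m ≳ k^{-1/2}`.
-/

open scoped ENNReal

open Module LinearMap

theorem LinearMap.trace_le_sqrt_finrank_range_mul {ι E : Type*} [Fintype ι]
    [NormedAddCommGroup E] [InnerProductSpace ℝ E] [FiniteDimensional ℝ E]
    (T : E →ₗ[ℝ] E) (b : OrthonormalBasis ι ℝ E) :
    trace ℝ E T ≤ √(finrank ℝ (range T)) * √(∑ i, ‖T (b i)‖ ^ 2) := by
  set P := (range T).starProjection
  have hPT : ∀ x, P (T x) = T x := fun x =>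
    Submodule.starProjection_eq_self_iff.mpr (mem_range_self T x)
  have hP : ∑ i, ‖P (b i)‖ ^ 2 = finrank ℝ (range T) := by
    calc ∑ i, ‖P (b i)‖ ^ 2 = ∑ i, inner ℝ (b i) (P.toLinearMap (b i)) := by
          refine Finset.sum_congr rfl fun i _ => ?_
          rw [← real_inner_self_eq_norm_sq, ContinuousLinearMap.coe_coe,
            Submodule.inner_starProjection_left_eq_right,
            Submodule.starProjection_eq_self_iff.mpr (Submodule.starProjection_apply_mem _ _)]
      _ = finrank ℝ (range T) := by
          rw [← trace_eq_sum_inner, (ContinuousLinearMap.IsIdempotentElem.toLinearMap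
            (range T).isIdempotentElem_starProjection).isProj_range.trace,
            Submodule.range_starProjection]
  calc trace ℝ E T = ∑ i, inner ℝ (b i) (T (b i)) := trace_eq_sum_inner T b
    _ = ∑ i, inner ℝ (P (b i)) (T (b i)) := by
        simp only [Submodule.inner_starProjection_left_eq_right, hPT, P]
    _ ≤ ∑ i, ‖P (b i)‖ * ‖T (b i)‖ := Finset.sum_le_sum fun i _ => real_inner_le_norm _ _
    _ ≤ √(∑ i, ‖P (b i)‖ ^ 2) * √(∑ i, ‖T (b i)‖ ^ 2) := Real.sum_mul_le_sqrt_mul_sqrt _ _ _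
    _ = √(finrank ℝ (range T)) * √(∑ i, ‖T (b i)‖ ^ 2) := by rw [hP]

theorem EuclideanSpace.norm_toLp_le_sqrt_card_mul_norm {ι : Type*} [Fintype ι] (v : ι → ℝ) :
    ‖WithLp.toLp 2 v‖ ≤ √(Fintype.card ι) * ‖v‖ := by
  rw [EuclideanSpace.norm_eq, ← Real.sqrt_sq (norm_nonneg v), ← Real.sqrt_mul (Nat.cast_nonneg _)]
  gcongr
  calc ∑ i, ‖v i‖ ^ 2 ≤ ∑ _i : ι, ‖v‖ ^ 2 := by gcongr with i; exact norm_le_pi_norm v i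
    _ = Fintype.card ι * ‖v‖ ^ 2 := by simp

theorem sum_diag_le_sqrt_finrank_range_mul {ι : Type*} [Fintype ι] [DecidableEq ι]
    (A : (ι → ℝ) →ₗ[ℝ] (ι → ℝ)) :
    ∑ i, A (Pi.single i 1) i ≤
      √(finrank ℝ (range A)) * √(∑ i, ‖WithLp.toLp 2 (A (Pi.single i 1))‖ ^ 2) := by
  let e := (WithLp.linearEquiv 2 ℝ (ι → ℝ)).symm
  let T := e.toLinearMap ∘ₗ A ∘ₗ e.symm.toLinearMap
  let b := EuclideanSpace.basisFun ι ℝ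
  have hTb : ∀ i, T (b i) = WithLp.toLp 2 (A (Pi.single i 1)) := by
    intro i; simp [T, e, b]
  have hrange : finrank ℝ (range T) = finrank ℝ (range A) := by
    rw [range_comp, range_comp, LinearEquiv.range, Submodule.map_top, LinearEquiv.finrank_map_eq]
  have htrace : trace ℝ _ T = ∑ i, A (Pi.single i 1) i := by
    rw [trace_eq_sum_inner T b]
    refine Finset.sum_congr rfl fun i _ => ?_
    rw [hTb, EuclideanSpace.basisFun_apply, EuclideanSpace.inner_single_left]
    simp
  simpa only [htrace, hrange, hTb] using T.trace_le_sqrt_finrank_range_mul b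

theorem sqrt_card_mul_one_sub_le_sqrt_finrank_range_mul {ι : Type*} [Fintype ι] [DecidableEq ι]
    (A : (ι → ℝ) →ₗ[ℝ] (ι → ℝ)) {m : ℝ}
    (hm : ∀ i, ‖Pi.single i 1 - A (Pi.single i 1)‖ ≤ m) :
    √(Fintype.card ι) * (1 - m) ≤ √(finrank ℝ (range A)) * (1 + √(Fintype.card ι) * m) := by
  rcases isEmpty_or_nonempty ι with _ | ⟨⟨i₀⟩⟩
  · simp
  set N := Fintype.card ι
  have hdiag : ∀ i, 1 - m ≤ A (Pi.single i 1) i := by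
    intro i
    have h := (norm_le_pi_norm (Pi.single i 1 - A (Pi.single i 1)) i).trans (hm i)
    rw [Pi.sub_apply, Pi.single_eq_same, Real.norm_eq_abs] at h
    linarith [le_abs_self (1 - A (Pi.single i 1) i)]
  have hcol : ∀ i, ‖WithLp.toLp 2 (A (Pi.single i 1))‖ ≤ 1 + √N * m := by
    intro i
    calc ‖WithLp.toLp 2 (A (Pi.single i 1))‖
        = ‖WithLp.toLp 2 (Pi.single i 1 : ι → ℝ)
            - WithLp.toLp 2 (Pi.single i 1 - A (Pi.single i 1))‖ := by
          rw [← WithLp.toLp_sub, sub_sub_cancel]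
      _ ≤ ‖WithLp.toLp 2 (Pi.single i 1 : ι → ℝ)‖
            + ‖WithLp.toLp 2 (Pi.single i 1 - A (Pi.single i 1))‖ := norm_sub_le _ _
      _ ≤ 1 + √N * m := by
          gcongr
          · simp
          · exact (EuclideanSpace.norm_toLp_le_sqrt_card_mul_norm _).trans (by gcongr; exact hm i)
  have hcol₀ : 0 ≤ 1 + √N * m := (norm_nonneg _).trans (hcol i₀)
  have hN : 0 < √N := Real.sqrt_pos.mpr (Nat.cast_pos.mpr (Fintype.card_pos_iff.mpr ⟨i₀⟩))
  have key : √N * √N * (1 - m) ≤ √(finrank ℝ (range A)) * (√N * (1 + √N * m)) :=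
    calc √N * √N * (1 - m) = ∑ _i : ι, (1 - m) := by
          rw [Real.mul_self_sqrt N.cast_nonneg, Finset.sum_const, Finset.card_univ, nsmul_eq_mul]
      _ ≤ ∑ i, A (Pi.single i 1) i := Finset.sum_le_sum fun i _ => hdiag i
      _ ≤ √(finrank ℝ (range A)) * √(∑ i, ‖WithLp.toLp 2 (A (Pi.single i 1))‖ ^ 2) :=
          sum_diag_le_sqrt_finrank_range_mul A
      _ ≤ √(finrank ℝ (range A)) * √(∑ _i : ι, (1 + √N * m) ^ 2) := by
          gcongr with i; exact hcol i
      _ = √(finrank ℝ (range A)) * (√N * (1 + √N * m)) := by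
          simp [N, Real.sqrt_mul, Real.sqrt_sq hcol₀]
  refine le_of_mul_le_mul_left ?_ hN
  linarith

theorem lpnorm_top {N : ℕ} (x : Fin N → ℝ) : lpnorm ∞ x = ‖x‖ := by
  rw [lpnorm, if_pos rfl]
  refine le_antisymm (Real.iSup_le (fun i => norm_le_pi_norm x i) (norm_nonneg x)) ?_
  refine (pi_norm_le_iff_of_nonneg (Real.iSup_nonneg fun i => abs_nonneg (x i))).mpr fun i => ?_
  exact le_ciSup (f := fun i => |x i|) (Set.finite_range _).bddAbove i

theorem norm_le_lpnorm {p : ℝ≥0∞} (hp : p ≠ 0) {N : ℕ} (x : Fin N → ℝ) : ‖x‖ ≤ lpnorm p x := by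
  rcases eq_or_ne p ∞ with rfl | hp_top
  · exact (lpnorm_top x).ge
  have ht : 0 < p.toReal := ENNReal.toReal_pos hp hp_top
  rw [lpnorm, if_neg hp_top]
  refine (pi_norm_le_iff_of_nonneg (by positivity)).mpr fun i => ?_
  calc ‖x i‖ = (|x i| ^ p.toReal) ^ (1 / p.toReal) := by
        rw [← Real.rpow_mul (abs_nonneg _), mul_one_div_cancel ht.ne', Real.rpow_one,
          Real.norm_eq_abs]
    _ ≤ (∑ j, |x j| ^ p.toReal) ^ (1 / p.toReal) := by
        gcongr
        exact Finset.single_le_sum (f := fun j => |x j| ^ p.toReal)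
          (fun j _ => by positivity) (Finset.mem_univ i)

theorem lpnorm_single_one {p : ℝ≥0∞} (hp : p ≠ 0) {N : ℕ} (i : Fin N) :
    lpnorm p (Pi.single i 1) = 1 := by
  rcases eq_or_ne p ∞ with rfl | hp_top
  · rw [lpnorm_top, Pi.norm_single, norm_one]
  have ht : p.toReal ≠ 0 := (ENNReal.toReal_pos hp hp_top).ne'
  rw [lpnorm, if_neg hp_top, Finset.sum_eq_single i (fun j _ hj => by simp [hj, ht]) (by simp)]
  simp

theorem le_approxNumId_top {p : ℝ≥0∞} (hp : p ≠ 0) {N k : ℕ} (hk : 0 < k) {c : ℝ}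
    (h : ∀ A : (Fin N → ℝ) →ₗ[ℝ] (Fin N → ℝ), finrank ℝ (range A) < k →
      ∃ x, lpnorm p x ≤ 1 ∧ c ≤ ‖x - A x‖) :
    c ≤ approxNumId p ∞ N k := by
  refine le_csInf ⟨_, 0, by simpa using hk, rfl⟩ ?_
  rintro _ ⟨A, hA, rfl⟩
  rw [← finrank_eq_rank, Nat.cast_lt] at hA
  obtain ⟨x, hx, hcx⟩ := h A hA
  set B := toContinuousLinearMap (LinearMap.id - A)
  have hbdd : BddAbove {c | ∃ x : Fin N → ℝ, lpnorm p x ≤ 1 ∧ c = lpnorm ∞ (x - A x)} := by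
    refine ⟨‖B‖, ?_⟩
    rintro _ ⟨y, hy, rfl⟩
    rw [lpnorm_top]
    calc ‖y - A y‖ = ‖B y‖ := rfl
      _ ≤ ‖B‖ * ‖y‖ := B.le_opNorm y
      _ ≤ ‖B‖ := mul_le_of_le_one_right (norm_nonneg B) ((norm_le_lpnorm hp y).trans hy)
  exact hcx.trans (le_csSup hbdd ⟨x, hx, (lpnorm_top _).symm⟩)

theorem approx_number_id_finite_lp_infty_lower_general
    (p : ℝ≥0∞) (h₀ : 0 < p) :
    ∃ C : ℝ, 0 < C ∧ ∀ k : ℕ, 1 ≤ k →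
      C * (k : ℝ) ^ (-(1/2) : ℝ) ≤ approxNumId p ∞ (2 * k) k := by
  have hsq : √2 * √2 = 2 := Real.mul_self_sqrt zero_le_two
  refine ⟨(2 - √2) / 4, by nlinarith [Real.sqrt_nonneg 2], fun k hk => ?_⟩
  refine le_approxNumId_top h₀.ne' hk fun A hA => ?_
  have : Nonempty (Fin (2 * k)) := ⟨⟨0, by omega⟩⟩
  obtain ⟨i, hi⟩ := Finite.exists_max fun i : Fin (2 * k) => ‖Pi.single i 1 - A (Pi.single i 1)‖
  refine ⟨Pi.single i 1, (lpnorm_single_one h₀.ne' i).le, ?_⟩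
  set m := ‖Pi.single i 1 - A (Pi.single i 1)‖
  have hm₀ : 0 ≤ m := norm_nonneg _
  have key := sqrt_card_mul_one_sub_le_sqrt_finrank_range_mul A hi
  set s := √(k : ℝ)
  have hs : 1 ≤ s := Real.one_le_sqrt.mpr (by exact_mod_cast hk)
  have hN : √(Fintype.card (Fin (2 * k)) : ℝ) = √2 * s := by
    rw [Fintype.card_fin]; push_cast; exact Real.sqrt_mul zero_le_two _
  have hr : √(finrank ℝ (range A) : ℝ) ≤ s := Real.sqrt_le_sqrt (by exact_mod_cast hA.le)
  rw [hN] at key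
  have hm : √2 * (1 - m) ≤ 1 + √2 * s * m := by
    refine le_of_mul_le_mul_left ?_ (zero_lt_one.trans_le hs)
    have hpos : 0 ≤ 1 + √2 * s * m := by positivity
    nlinarith [Real.sqrt_nonneg 2, mul_le_mul_of_nonneg_right hr hpos]
  rw [Real.rpow_neg k.cast_nonneg, ← Real.sqrt_eq_rpow, ← div_eq_mul_inv,
    div_le_iff₀ (zero_lt_one.trans_le hs)]
  nlinarith [Real.sqrt_nonneg 2]

/-- Let `0 < p ≤ 1`. Then there is a constant `C > 0`, independent of `k`, such that
`a_k(id : ℓ_p^{2k} → ℓ_∞^{2k}) ≥ C k^{-1/2}` for all `k ≥ 1`. -/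
theorem approx_number_id_finite_lp_infty_lower
    (p : ℝ≥0∞) (h₀ : 0 < p) (h₁ : p ≤ 1) :
    ∃ C : ℝ, 0 < C ∧ ∀ k : ℕ, 1 ≤ k →
      C * (k : ℝ) ^ (-(1/2) : ℝ) ≤ approxNumId p ∞ (2 * k) k :=
  approx_number_id_finite_lp_infty_lower_general p h₀
end

section
/- Let ρ > 0, let φ belong to the class 𝒱 with α_φ := inf_{t>1} (log φ̄(t))/(log t), and let γ, η ∈ ℝ. If γ > α_φ + η, then sup_{M ≥ 1} 2^{Mηρ} φ(2^M)^ρ Σ_{m=0}^{M} 2^{−mγρ} 2^{−(M−m)ηρ} φ(2^{M−m})^{−ρ} < ∞. -/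
/-! Splitting `φ(t₁t₂s)/φ(s)` at `t₂s` shows that `φ̄` is submultiplicative, so `u ↦ log φ̄(eᵘ)` is
subadditive on `[0, ∞)`. Being measurable, it is bounded above on compact subintervals of
`(0, ∞)` (a Steinhaus-type measure count), hence grows at most like `u · log φ̄(t) / log t` for
every `t > 1`.
Choosing `t` with slope `c < γ - η` gives `φ(2^M)/φ(2^(M-m)) ≤ φ̄(2^m) ≤ K 2^(cm)`, so the `m`-th
summand is at most `K^ρ 2^(m(η-γ+c)ρ)`, a convergent geometric series. -/

open scoped ENNReal

/-- `φ̲(t) = inf_{s ≥ 1} φ(ts)/φ(s)`. -/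
noncomputable def lowerRatio (φ : ℝ → ℝ) (t : ℝ) : ℝ :=
  sInf {r : ℝ | ∃ s : ℝ, 1 ≤ s ∧ r = φ (t * s) / φ s}

/-- `φ̄(t) = sup_{s ≥ 1} φ(ts)/φ(s)`. -/
noncomputable def upperRatio (φ : ℝ → ℝ) (t : ℝ) : ℝ :=
  sSup {r : ℝ | ∃ s : ℝ, 1 ≤ s ∧ r = φ (t * s) / φ s}

/-- A measurable function `φ : [1,∞) → (0,∞)` belongs to the class `𝒱` if
`φ̲` and `φ̄` are measurable and `0 < φ̲(t)` and `φ̄(t) < ∞` for all `t ≥ 1`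
(finiteness of `φ̄(t)` is expressed by boundedness of the defining set). -/
structure ClassV (φ : ℝ → ℝ) : Prop where
  pos : ∀ s : ℝ, 1 ≤ s → 0 < φ s
  meas : Measurable fun s : Set.Ici (1 : ℝ) => φ s
  lower_pos : ∀ t : ℝ, 1 ≤ t → 0 < lowerRatio φ t
  upper_bdd : ∀ t : ℝ, 1 ≤ t → BddAbove {r : ℝ | ∃ s : ℝ, 1 ≤ s ∧ r = φ (t * s) / φ s}
  lower_meas : Measurable fun t : Set.Ici (1 : ℝ) => lowerRatio φ t
  upper_meas : Measurable fun t : Set.Ici (1 : ℝ) => upperRatio φ t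

/-- `α_φ = inf_{t > 1} log φ̄(t) / log t`. -/
noncomputable def alphaV (φ : ℝ → ℝ) : ℝ :=
  sInf {r : ℝ | ∃ t : ℝ, 1 < t ∧ r = Real.log (upperRatio φ t) / Real.log t}

/-- `β_φ = sup_{t > 1} log φ̲(t) / log t`. -/
noncomputable def betaV (φ : ℝ → ℝ) : ℝ :=
  sSup {r : ℝ | ∃ t : ℝ, 1 < t ∧ r = Real.log (lowerRatio φ t) / Real.log t}

open MeasureTheory Set

section Subadditive

variable {g : ℝ → ℝ}

theorem bddAbove_image_Icc_of_subadditive (hg : Measurable g)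
    (hsub : ∀ x y, 0 ≤ x → 0 ≤ y → g (x + y) ≤ g x + g y) {a b : ℝ} (ha : 0 < a) :
    BddAbove (g '' Icc a b) := by
  set D : ℕ → Set ℝ := fun n => Icc 0 b ∩ {y | (n : ℝ) < g y}
  have hD_meas : ∀ n, MeasurableSet (D n) :=
    fun n => measurableSet_Icc.inter (measurableSet_lt measurable_const hg)
  have hD_anti : Antitone D := fun m n hmn y hy =>
    ⟨hy.1, (show (m : ℝ) ≤ n by exact_mod_cast hmn).trans_lt hy.2⟩
  have hD_empty : ⋂ n, D n = ∅ := by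
    refine eq_empty_of_forall_notMem fun y hy => ?_
    obtain ⟨n, hn⟩ := exists_nat_ge (g y)
    exact (mem_iInter.1 hy n).2.not_ge hn
  have hD_lim : Filter.Tendsto (volume ∘ D) Filter.atTop (nhds 0) := by
    simpa [hD_empty] using tendsto_measure_iInter_atTop (fun n => (hD_meas n).nullMeasurableSet)
      hD_anti ⟨0, ((measure_mono inter_subset_left).trans_lt measure_Icc_lt_top).ne⟩
  obtain ⟨n, hn⟩ := (hD_lim.eventually (gt_mem_nhds (ENNReal.ofReal_pos.2 (half_pos ha)))).exists
  refine ⟨2 * n, ?_⟩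
  rintro _ ⟨x, ⟨hax, hxb⟩, rfl⟩
  -- `[0, x]` has measure `x > 2 μ(D n)`, so some `y ∈ [0, x]` has `y ∉ D n` and `x - y ∉ D n`.
  have hcover : ¬ Icc 0 x ⊆ D n ∪ (fun y => x - y) ⁻¹' D n := by
    intro hcov
    have hreflect : volume ((fun y => x - y) ⁻¹' D n) = volume (D n) :=
      (Measure.measurePreserving_sub_left volume x).measure_preimage (hD_meas n).nullMeasurableSet
    have := (measure_mono (μ := volume) hcov).trans (measure_union_le _ _)
    rw [hreflect, Real.volume_Icc, sub_zero] at this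
    have hlt : volume (D n) + volume (D n) < ENNReal.ofReal x := by
      calc volume (D n) + volume (D n) < ENNReal.ofReal (a / 2) + ENNReal.ofReal (a / 2) :=
            ENNReal.add_lt_add hn hn
        _ ≤ ENNReal.ofReal x := by
          rw [← ENNReal.ofReal_add (by linarith) (by linarith)]
          exact ENNReal.ofReal_le_ofReal (by linarith)
    exact this.not_gt hlt
  obtain ⟨y, ⟨hy0, hyx⟩, hy⟩ := not_subset.1 hcover
  simp only [D, mem_union, mem_preimage, mem_inter_iff, mem_Icc, mem_ofPred_eq, not_or,
    not_and, not_lt] at hy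
  have hgy := hy.1 ⟨hy0, hyx.trans hxb⟩
  have hgxy := hy.2 ⟨by linarith, by linarith⟩
  calc g x = g (y + (x - y)) := by rw [add_sub_cancel]
    _ ≤ g y + g (x - y) := hsub _ _ hy0 (by linarith)
    _ ≤ 2 * n := by linarith

theorem subadditive_natCast_mul_add_le
    (hsub : ∀ x y, 0 ≤ x → 0 ≤ y → g (x + y) ≤ g x + g y) {x r : ℝ} (hx : 0 ≤ x) (hr : 0 ≤ r)
    (k : ℕ) : g (k * x + r) ≤ k * g x + g r := by
  induction k with
  | zero => simp
  | succ k ih =>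
    have hkxr : 0 ≤ k * x + r := by positivity
    calc g ((k + 1 : ℕ) * x + r) = g (x + (k * x + r)) := by push_cast; ring_nf
      _ ≤ g x + g (k * x + r) := hsub _ _ hx hkxr
      _ ≤ (k + 1 : ℕ) * g x + g r := by push_cast; linarith

theorem le_mul_add_of_subadditive_of_bddAbove
    (hsub : ∀ x y, 0 ≤ x → 0 ≤ y → g (x + y) ≤ g x + g y) {L a B : ℝ} (hL : 0 < L) (ha : 0 ≤ a)
    (hB : ∀ x ∈ Icc a (a + L), g x ≤ B) {u : ℝ} (hu : a ≤ u) :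
    g u ≤ g L / L * u + (B + |g L / L| * (a + L)) := by
  set k := ⌊(u - a) / L⌋₊
  have hk_le : k * L ≤ u - a := (le_div_iff₀ hL).1 (Nat.floor_le (div_nonneg (by linarith) hL.le))
  have hk_gt : u - a < (k + 1) * L := (div_lt_iff₀ hL).1 (Nat.lt_floor_add_one _)
  set r := u - k * L
  have hr : r ∈ Icc a (a + L) := ⟨by linarith, by linarith⟩
  have hkgL : k * g L = g L / L * u - g L / L * r := by field_simp; ring
  have hcr : -(g L / L * r) ≤ |g L / L| * (a + L) := by
    calc -(g L / L * r) ≤ |g L / L * r| := neg_le_abs _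
      _ = |g L / L| * r := by rw [abs_mul, abs_of_nonneg (a := r) (by linarith [hr.1])]
      _ ≤ |g L / L| * (a + L) := mul_le_mul_of_nonneg_left hr.2 (abs_nonneg _)
  calc g u = g (k * L + r) := by rw [add_sub_cancel]
    _ ≤ k * g L + g r := subadditive_natCast_mul_add_le hsub hL.le (by linarith [hr.1]) k
    _ ≤ g L / L * u + (B + |g L / L| * (a + L)) := by linarith [hB r hr]

theorem exists_le_mul_add_of_subadditive (hg : Measurable g)
    (hsub : ∀ x y, 0 ≤ x → 0 ≤ y → g (x + y) ≤ g x + g y) {L a : ℝ} (hL : 0 < L) (ha : 0 < a) :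
    ∃ K, ∀ u, a ≤ u → g u ≤ g L / L * u + K := by
  obtain ⟨B, hB⟩ := bddAbove_image_Icc_of_subadditive hg hsub (b := a + L) ha
  exact ⟨_, fun u hu => le_mul_add_of_subadditive_of_bddAbove hsub hL ha.le
    (fun x hx => hB (mem_image_of_mem g hx)) hu⟩

end Subadditive

open Real

section UpperRatio

variable {φ : ℝ → ℝ}

theorem ClassV.div_le_upperRatio (hφ : ClassV φ) {t s : ℝ} (ht : 1 ≤ t) (hs : 1 ≤ s) :
    φ (t * s) / φ s ≤ upperRatio φ t :=
  le_csSup (hφ.upper_bdd t ht) ⟨s, hs, rfl⟩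

theorem ClassV.upperRatio_pos (hφ : ClassV φ) {t : ℝ} (ht : 1 ≤ t) : 0 < upperRatio φ t :=
  (div_pos (hφ.pos _ (by rwa [mul_one])) (hφ.pos 1 le_rfl)).trans_le
    (hφ.div_le_upperRatio ht le_rfl)

theorem ClassV.upperRatio_one (hφ : ClassV φ) : upperRatio φ 1 = 1 := by
  have hset : {r : ℝ | ∃ s : ℝ, 1 ≤ s ∧ r = φ (1 * s) / φ s} = {1} := by
    ext r
    simp only [one_mul, mem_ofPred_eq, mem_singleton_iff]
    constructor
    · rintro ⟨s, hs, rfl⟩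
      exact div_self (hφ.pos s hs).ne'
    · rintro rfl
      exact ⟨1, le_rfl, (div_self (hφ.pos 1 le_rfl).ne').symm⟩
  rw [upperRatio, hset, csSup_singleton]

theorem ClassV.upperRatio_mul_le (hφ : ClassV φ) {t₁ t₂ : ℝ} (h₁ : 1 ≤ t₁) (h₂ : 1 ≤ t₂) :
    upperRatio φ (t₁ * t₂) ≤ upperRatio φ t₁ * upperRatio φ t₂ := by
  refine csSup_le ⟨_, 1, le_rfl, rfl⟩ ?_
  rintro r ⟨s, hs, rfl⟩
  have hts : 1 ≤ t₂ * s := one_le_mul_of_one_le_of_one_le h₂ hs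
  calc φ (t₁ * t₂ * s) / φ s = φ (t₁ * (t₂ * s)) / φ (t₂ * s) * (φ (t₂ * s) / φ s) := by
        rw [mul_assoc, div_mul_div_cancel₀ (hφ.pos _ hts).ne']
    _ ≤ upperRatio φ t₁ * upperRatio φ t₂ :=
        mul_le_mul (hφ.div_le_upperRatio h₁ hts) (hφ.div_le_upperRatio h₂ hs)
          (div_nonneg (hφ.pos _ hts).le (hφ.pos _ hs).le) (hφ.upperRatio_pos h₁).le

-- Constant on `u ≤ 0`, so that measurability can be stated on all of `ℝ`.
noncomputable def logUpperRatio (φ : ℝ → ℝ) (u : ℝ) : ℝ :=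
  Real.log (upperRatio φ (Real.exp (max u 0)))

theorem logUpperRatio_of_nonneg {u : ℝ} (hu : 0 ≤ u) :
    logUpperRatio φ u = Real.log (upperRatio φ (Real.exp u)) := by
  rw [logUpperRatio, max_eq_left hu]

theorem ClassV.measurable_logUpperRatio (hφ : ClassV φ) : Measurable (logUpperRatio φ) := by
  have hexp : Measurable fun u : ℝ => (⟨Real.exp (max u 0), one_le_exp (le_max_right u 0)⟩ :
      Set.Ici (1 : ℝ)) :=
    (measurable_exp.comp (measurable_id.max measurable_const)).subtype_mk
  exact measurable_log.comp (hφ.upper_meas.comp hexp)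

theorem ClassV.logUpperRatio_add_le (hφ : ClassV φ) (x y : ℝ) (hx : 0 ≤ x) (hy : 0 ≤ y) :
    logUpperRatio φ (x + y) ≤ logUpperRatio φ x + logUpperRatio φ y := by
  have hex := one_le_exp hx
  have hey := one_le_exp hy
  rw [logUpperRatio_of_nonneg (add_nonneg hx hy), logUpperRatio_of_nonneg hx,
    logUpperRatio_of_nonneg hy, exp_add, ← log_mul (hφ.upperRatio_pos hex).ne'
    (hφ.upperRatio_pos hey).ne']
  exact log_le_log (hφ.upperRatio_pos (one_le_mul_of_one_le_of_one_le hex hey))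
    (hφ.upperRatio_mul_le hex hey)

theorem exists_lt_of_alphaV_lt {c : ℝ} (hc : alphaV φ < c) :
    ∃ t, 1 < t ∧ Real.log (upperRatio φ t) / Real.log t < c := by
  by_cases hbdd : BddBelow {r : ℝ | ∃ t : ℝ, 1 < t ∧ r = Real.log (upperRatio φ t) / Real.log t}
  · obtain ⟨_, ⟨t, ht, rfl⟩, htc⟩ := (csInf_lt_iff hbdd ⟨_, 2, one_lt_two, rfl⟩).1 hc
    exact ⟨t, ht, htc⟩
  · obtain ⟨_, ⟨t, ht, rfl⟩, htc⟩ := not_bddBelow_iff.1 hbdd c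
    exact ⟨t, ht, htc⟩

theorem ClassV.exists_upperRatio_two_pow_le (hφ : ClassV φ) {c : ℝ} (hc : alphaV φ < c) :
    ∃ K, 0 < K ∧ ∀ m : ℕ, upperRatio φ (2 ^ m) ≤ K * (2 ^ c) ^ m := by
  obtain ⟨t, ht, htc⟩ := exists_lt_of_alphaV_lt hc
  have hL : 0 < Real.log t := log_pos ht
  have hgL : logUpperRatio φ (Real.log t) = Real.log (upperRatio φ t) := by
    rw [logUpperRatio_of_nonneg hL.le, exp_log (by linarith)]
  obtain ⟨K, hK⟩ := exists_le_mul_add_of_subadditive hφ.measurable_logUpperRatio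
    hφ.logUpperRatio_add_le hL (log_pos one_lt_two)
  refine ⟨exp (max K 0), exp_pos _, fun m => ?_⟩
  have hlog : Real.log (upperRatio φ (2 ^ m)) ≤ c * (m * Real.log 2) + max K 0 := by
    rcases Nat.eq_zero_or_pos m with rfl | hm
    · simp [hφ.upperRatio_one]
    · have hu : Real.log 2 ≤ m * Real.log 2 :=
        le_mul_of_one_le_left (log_nonneg one_le_two) (by exact_mod_cast hm)
      have hslope :
          Real.log (upperRatio φ t) / Real.log t * (m * Real.log 2) ≤ c * (m * Real.log 2) :=
        mul_le_mul_of_nonneg_right htc.le (by positivity)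
      have := hK _ hu
      rw [hgL, logUpperRatio_of_nonneg (by positivity), exp_nat_mul, exp_log two_pos] at this
      linarith [le_max_left K 0]
  calc upperRatio φ (2 ^ m) = exp (Real.log (upperRatio φ (2 ^ m))) :=
        (exp_log (hφ.upperRatio_pos (one_le_pow₀ one_le_two))).symm
    _ ≤ exp (c * (m * Real.log 2) + max K 0) := exp_le_exp.2 hlog
    _ = exp (max K 0) * (2 ^ c) ^ m := by
        rw [rpow_def_of_pos two_pos, ← exp_nat_mul, ← exp_add]
        ring_nf

end UpperRatio

theorem two_rpow_mul_summand_eq {P Q ρ γ η : ℝ} (hP : 0 ≤ P) (hQ : 0 ≤ Q) {m M : ℕ}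
    (hmM : m ≤ M) :
    (2 : ℝ) ^ ((M : ℝ) * η * ρ) * P ^ ρ *
        ((2 : ℝ) ^ (-(m : ℝ) * γ * ρ) * (2 : ℝ) ^ (-((M - m : ℕ) : ℝ) * η * ρ) * Q ^ (-ρ)) =
      ((2 : ℝ) ^ ((η - γ) * ρ)) ^ m * (P / Q) ^ ρ := by
  have hexp : (2 : ℝ) ^ ((M : ℝ) * η * ρ) * (2 : ℝ) ^ (-(m : ℝ) * γ * ρ) *
      (2 : ℝ) ^ (-((M - m : ℕ) : ℝ) * η * ρ) = ((2 : ℝ) ^ ((η - γ) * ρ)) ^ m := by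
    rw [← rpow_add two_pos, ← rpow_add two_pos, ← rpow_mul_natCast zero_le_two]
    congr 1
    push_cast [hmM]
    ring
  rw [div_rpow hP hQ, rpow_neg hQ, ← hexp]
  ring

theorem ClassV.summand_le {φ : ℝ → ℝ} (hφ : ClassV φ) {ρ γ η c K : ℝ} (hρ : 0 ≤ ρ)
    (hK0 : 0 ≤ K) (hK : ∀ m : ℕ, upperRatio φ (2 ^ m) ≤ K * (2 ^ c) ^ m) {m M : ℕ}
    (hmM : m ≤ M) :
    (2 : ℝ) ^ ((M : ℝ) * η * ρ) * φ ((2 : ℝ) ^ M) ^ ρ *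
        ((2 : ℝ) ^ (-(m : ℝ) * γ * ρ) * (2 : ℝ) ^ (-((M - m : ℕ) : ℝ) * η * ρ) *
          φ ((2 : ℝ) ^ (M - m)) ^ (-ρ)) ≤
      K ^ ρ * ((2 : ℝ) ^ ((η - γ + c) * ρ)) ^ m := by
  have hP := hφ.pos _ (one_le_pow₀ (one_le_two (α := ℝ)) (n := M))
  have hQ := hφ.pos _ (one_le_pow₀ (one_le_two (α := ℝ)) (n := M - m))
  have hratio : φ (2 ^ M) / φ (2 ^ (M - m)) ≤ K * (2 ^ c) ^ m := by
    have hsplit : (2 : ℝ) ^ M = 2 ^ m * 2 ^ (M - m) := by rw [← pow_add, Nat.add_sub_cancel' hmM]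
    rw [hsplit]
    exact (hφ.div_le_upperRatio (one_le_pow₀ one_le_two) (one_le_pow₀ one_le_two)).trans (hK m)
  rw [two_rpow_mul_summand_eq hP.le hQ.le hmM]
  calc ((2 : ℝ) ^ ((η - γ) * ρ)) ^ m * (φ (2 ^ M) / φ (2 ^ (M - m))) ^ ρ
      ≤ ((2 : ℝ) ^ ((η - γ) * ρ)) ^ m * (K * (2 ^ c) ^ m) ^ ρ := by
        gcongr
    _ = K ^ ρ * ((2 : ℝ) ^ ((η - γ + c) * ρ)) ^ m := by
        rw [mul_rpow hK0 (by positivity), ← rpow_pow_comm (by positivity), ← rpow_mul zero_le_two,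
          add_mul, rpow_add two_pos, mul_pow]
        ring

/-- Let `ρ > 0`, `φ ∈ 𝒱` and `γ > α_φ + η`.  Then
`sup_{M ≥ 1} 2^{Mηρ} φ(2^M)^ρ ∑_{m=0}^{M} 2^{-mγρ} 2^{-(M-m)ηρ} φ(2^{M-m})^{-ρ} < ∞`. -/
theorem classV_sum_bound_alpha (ρ : ℝ) (hρ : 0 < ρ) (φ : ℝ → ℝ) (hφ : ClassV φ)
    (γ η : ℝ) (hγ : γ > alphaV φ + η) :
    ∃ C : ℝ, ∀ M : ℕ, 1 ≤ M →
      (2 : ℝ) ^ ((M : ℝ) * η * ρ) * φ ((2 : ℝ) ^ M) ^ ρ *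
        ∑ m ∈ Finset.range (M + 1),
          (2 : ℝ) ^ (-(m : ℝ) * γ * ρ) * (2 : ℝ) ^ (-((M - m : ℕ) : ℝ) * η * ρ) *
            φ ((2 : ℝ) ^ (M - m)) ^ (-ρ) ≤ C := by
  obtain ⟨c, hαc, hcγ⟩ := exists_between (show alphaV φ < γ - η by linarith)
  obtain ⟨K, hK0, hK⟩ := hφ.exists_upperRatio_two_pow_le hαc
  set q := (2 : ℝ) ^ ((η - γ + c) * ρ)
  have hq0 : 0 ≤ q := by positivity
  have hq1 : q < 1 := rpow_lt_one_of_one_lt_of_neg one_lt_two (by nlinarith)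
  refine ⟨K ^ ρ * (1 / (1 - q)), fun M _ => ?_⟩
  rw [Finset.mul_sum]
  calc _ ≤ ∑ m ∈ Finset.range (M + 1), K ^ ρ * q ^ m := Finset.sum_le_sum fun m hm =>
        hφ.summand_le hρ.le hK0.le hK (Nat.lt_succ_iff.1 (Finset.mem_range.1 hm))
    _ = K ^ ρ * ∑ m ∈ Finset.range (M + 1), q ^ m := (Finset.mul_sum _ _ _).symm
    _ ≤ K ^ ρ * (1 / (1 - q)) := by
        gcongr
        simpa using geom_sum_Ico_le_of_lt_one (m := 0) (n := M + 1) hq0 hq1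
end

section
/- Let ρ > 0, let φ belong to the class 𝒱 with β_φ := sup_{t>1} (log φ̲(t))/(log t), and let γ, η ∈ ℝ. If γ < β_φ + η, then sup_{M ≥ 1} 2^{Mγρ} Σ_{m=0}^{M} 2^{−mγρ} 2^{−(M−m)ηρ} φ(2^{M−m})^{−ρ} < ∞. -/
open scoped ENNReal

/-! With `δ := γ - η` the sum is `∑_{k ≤ M} 2^{kδρ} φ(2^k)^{-ρ}`, so it suffices to have a
Potter-type lower bound `c x^{δ'} ≤ φ x` on `[1, ∞)` for some `δ < δ' < β_φ`: the series is then
dominated by a geometric one. Pick `t > 1` with `t^{δ'} < φ̲(t)`; supermultiplicativity gives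
`φ̲(t)^n φ(1) ≤ φ(t^n)`, and to pass from the powers `t^n` to an arbitrary `x` it is enough that
`φ̄` is bounded on `[t, t²]`. This boundedness is where measurability of `φ̄` enters. -/

open MeasureTheory Set

lemma exists_mem_and_sub_mem_of_volume_gt {A : Set ℝ} (hA : MeasurableSet A) {b x : ℝ}
    (hAb : A ⊆ Icc 0 b) (hx : x ∈ Icc 0 b) (hvol : b - x / 2 < volume.real A) :
    ∃ s ∈ A, x - s ∈ A := by
  have hfin : ∀ S ⊆ Icc 0 b, volume S ≠ ⊤ := fun S hS =>
    ((measure_mono hS).trans_lt measure_Icc_lt_top).ne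
  have hxb : Icc 0 x ⊆ Icc 0 b := Icc_subset_Icc_right hx.2
  set P := A ∩ Icc 0 x
  set Q := (x - ·) ⁻¹' P
  have hPx : P ⊆ Icc 0 x := inter_subset_right
  have hQx : Q ⊆ Icc 0 x := fun s hs => ⟨by linarith [(hPx hs).2], by linarith [(hPx hs).1]⟩
  have hAP : volume.real A ≤ volume.real P + (b - x) := by
    have hcover : A ⊆ P ∪ Ioc x b := fun s hs => by
      by_cases h : s ≤ x
      · exact Or.inl ⟨hs, (hAb hs).1, h⟩
      · exact Or.inr ⟨not_le.1 h, (hAb hs).2⟩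
    calc volume.real A ≤ volume.real (P ∪ Ioc x b) :=
          measureReal_mono hcover (hfin _ (union_subset (hPx.trans hxb)
            (Ioc_subset_Icc_self.trans (Icc_subset_Icc_left hx.1))))
      _ ≤ volume.real P + volume.real (Ioc x b) := measureReal_union_le _ _
      _ = volume.real P + (b - x) := by rw [Real.volume_real_Ioc_of_le hx.2]
  have hQP : volume.real Q = volume.real P := by
    rw [measureReal_def, measureReal_def,
      (Measure.measurePreserving_sub_left volume x).measure_preimage
        (hA.inter measurableSet_Icc).nullMeasurableSet]
  -- `P` and its reflection `Q` lie in `[0, x]` and each has measure `> x / 2`.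
  by_contra! hnot
  have hdisj : Disjoint P Q := disjoint_left.2 fun s hsP hsQ => hnot s hsP.1 hsQ.1
  have hPQ : volume.real P + volume.real Q ≤ x := by
    rw [← measureReal_union hdisj
      (measurableSet_preimage (measurable_const.sub measurable_id) (hA.inter measurableSet_Icc))
      (hfin _ (hPx.trans hxb)) (hfin _ (hQx.trans hxb))]
    calc volume.real (P ∪ Q) ≤ volume.real (Icc 0 x) :=
          measureReal_mono (union_subset hPx hQx) (hfin _ hxb)
      _ = x := by rw [Real.volume_real_Icc_of_le hx.1, sub_zero]
  linarith

lemma two_rpow_mul_sum_range_eq (M : ℕ) (γ η ρ : ℝ) (f : ℕ → ℝ) :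
    (2 : ℝ) ^ ((M : ℝ) * γ * ρ) *
        ∑ m ∈ Finset.range (M + 1),
          (2 : ℝ) ^ (-(m : ℝ) * γ * ρ) * (2 : ℝ) ^ (-((M - m : ℕ) : ℝ) * η * ρ) * f (M - m) =
      ∑ k ∈ Finset.range (M + 1), (2 : ℝ) ^ ((k : ℝ) * (γ - η) * ρ) * f k := by
  rw [Finset.mul_sum, ← Finset.sum_range_reflect]
  refine Finset.sum_congr rfl fun m hm => ?_
  have hmM : m ≤ M := Nat.lt_succ_iff.1 (Finset.mem_range.1 hm)
  rw [Nat.add_sub_cancel, Nat.sub_sub_self hmM, Nat.cast_sub hmM, ← mul_assoc, ← mul_assoc, ← Real.rpow_add two_pos,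
    ← Real.rpow_add two_pos]
  ring_nf

namespace ClassV

variable {φ : ℝ → ℝ}

lemma lowerRatio_mul_le (hφ : ClassV φ) {t s : ℝ} (ht : 1 ≤ t) (hs : 1 ≤ s) :
    lowerRatio φ t * φ s ≤ φ (t * s) := by
  have hbdd : BddBelow {r : ℝ | ∃ s : ℝ, 1 ≤ s ∧ r = φ (t * s) / φ s} := by
    refine ⟨0, ?_⟩
    rintro _ ⟨s, hs, rfl⟩
    exact div_nonneg (hφ.pos _ (one_le_mul_of_one_le_of_one_le ht hs)).le (hφ.pos s hs).le
  exact (le_div_iff₀ (hφ.pos s hs)).1 (csInf_le hbdd ⟨s, hs, rfl⟩)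

lemma le_upperRatio_mul (hφ : ClassV φ) {t s : ℝ} (ht : 1 ≤ t) (hs : 1 ≤ s) :
    φ (t * s) ≤ upperRatio φ t * φ s :=
  (div_le_iff₀ (hφ.pos s hs)).1 (le_csSup (hφ.upper_bdd t ht) ⟨s, hs, rfl⟩)

lemma upperRatio_pos_s11 (hφ : ClassV φ) {t : ℝ} (ht : 1 ≤ t) : 0 < upperRatio φ t := by
  have h := hφ.le_upperRatio_mul ht le_rfl
  rw [mul_one] at h
  exact pos_of_mul_pos_left ((hφ.pos t ht).trans_le h) (hφ.pos 1 le_rfl).le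

lemma upperRatio_mul_le_s11 (hφ : ClassV φ) {a b : ℝ} (ha : 1 ≤ a) (hb : 1 ≤ b) :
    upperRatio φ (a * b) ≤ upperRatio φ a * upperRatio φ b := by
  refine csSup_le ⟨_, 1, le_rfl, rfl⟩ ?_
  rintro _ ⟨s, hs, rfl⟩
  rw [div_le_iff₀ (hφ.pos s hs), mul_assoc a]
  calc φ (a * (b * s)) ≤ upperRatio φ a * φ (b * s) :=
        hφ.le_upperRatio_mul ha (one_le_mul_of_one_le_of_one_le hb hs)
    _ ≤ upperRatio φ a * (upperRatio φ b * φ s) :=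
        mul_le_mul_of_nonneg_left (hφ.le_upperRatio_mul hb hs) (hφ.upperRatio_pos_s11 ha).le
    _ = upperRatio φ a * upperRatio φ b * φ s := by ring

lemma lowerRatio_pow_mul_le (hφ : ClassV φ) {t : ℝ} (ht : 1 ≤ t) (n : ℕ) :
    lowerRatio φ t ^ n * φ 1 ≤ φ (t ^ n) := by
  induction n with
  | zero => simp
  | succ n ih =>
    calc lowerRatio φ t ^ (n + 1) * φ 1 = lowerRatio φ t * (lowerRatio φ t ^ n * φ 1) := by ring
      _ ≤ lowerRatio φ t * φ (t ^ n) := mul_le_mul_of_nonneg_left ih (hφ.lower_pos t ht).le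
      _ ≤ φ (t * t ^ n) := hφ.lowerRatio_mul_le ht (one_le_pow₀ ht)
      _ = φ (t ^ (n + 1)) := by rw [pow_succ']

lemma measurableSet_upperRatio_le (hφ : ClassV φ) (c : ℝ) :
    MeasurableSet {u : ℝ | 1 ≤ u ∧ upperRatio φ u ≤ c} := by
  have h : {u : ℝ | 1 ≤ u ∧ upperRatio φ u ≤ c} =
      Subtype.val '' {u : Ici (1 : ℝ) | upperRatio φ u ≤ c} := by
    ext u
    constructor
    · rintro ⟨hu, hc⟩
      exact ⟨⟨u, hu⟩, hc, rfl⟩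
    · rintro ⟨⟨u, hu⟩, hc, rfl⟩
      exact ⟨hu, hc⟩
  rw [h]
  exact measurableSet_Ici.subtype_image (hφ.upper_meas measurableSet_Iic)

/-- A Steinhaus-type argument: in logarithmic coordinates the sublevel sets of `upperRatio φ`
exhaust `[0, 2 log t]`, so one of them fills more than three quarters of it, and every point of
`[log t, 2 log t]` is then a sum of two of its points; submultiplicativity concludes. -/
lemma exists_upperRatio_le_of_mem_Icc (hφ : ClassV φ) {t : ℝ} (ht : 1 < t) :
    ∃ K, ∀ u ∈ Icc t (t ^ 2), upperRatio φ u ≤ K := by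
  set L := Real.log t
  have hL : 0 < L := Real.log_pos ht
  set B : ℕ → Set ℝ := fun n => Icc 0 (2 * L) ∩ Real.exp ⁻¹' {u | 1 ≤ u ∧ upperRatio φ u ≤ n}
  have hBmeas (n : ℕ) : MeasurableSet (B n) :=
    measurableSet_Icc.inter (Real.measurable_exp (hφ.measurableSet_upperRatio_le n))
  have hBmono : Monotone B := fun n m hnm x hx =>
    ⟨hx.1, hx.2.1, hx.2.2.trans (Nat.cast_le.2 hnm)⟩
  have hBunion : ⋃ n, B n = Icc 0 (2 * L) := by
    refine Subset.antisymm (iUnion_subset fun n => inter_subset_left) fun x hx => ?_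
    obtain ⟨n, hn⟩ := exists_nat_ge (upperRatio φ (Real.exp x))
    exact mem_iUnion.2 ⟨n, hx, Real.one_le_exp hx.1, hn⟩
  obtain ⟨N, hN⟩ : ∃ N, ENNReal.ofReal (3 * L / 2) < volume (B N) := by
    rw [← lt_iSup_iff, ← hBmono.measure_iUnion, hBunion, Real.volume_Icc,
      ENNReal.ofReal_lt_ofReal_iff (by linarith)]
    linarith
  rw [ENNReal.ofReal_lt_iff_lt_toReal (by linarith)
    ((measure_mono inter_subset_left).trans_lt measure_Icc_lt_top).ne, ← measureReal_def] at hN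
  refine ⟨N * N, fun u hu => ?_⟩
  have hu0 : 0 < u := by linarith [hu.1]
  have hlog : Real.log u ∈ Icc L (2 * L) := by
    refine ⟨Real.log_le_log (by linarith) hu.1, ?_⟩
    calc Real.log u ≤ Real.log (t ^ 2) := Real.log_le_log hu0 hu.2
      _ = 2 * L := by rw [Real.log_pow, Nat.cast_ofNat]
  obtain ⟨s, ⟨-, hs1, hsN⟩, ⟨-, hr1, hrN⟩⟩ := exists_mem_and_sub_mem_of_volume_gt (hBmeas N)
    (x := Real.log u) inter_subset_left ⟨hL.le.trans hlog.1, hlog.2⟩ (by linarith [hlog.1])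
  calc upperRatio φ u = upperRatio φ (Real.exp (Real.log u - s) * Real.exp s) := by
        rw [← Real.exp_add, sub_add_cancel, Real.exp_log hu0]
    _ ≤ upperRatio φ (Real.exp (Real.log u - s)) * upperRatio φ (Real.exp s) :=
        hφ.upperRatio_mul_le_s11 hr1 hs1
    _ ≤ N * N := mul_le_mul hrN hsN (hφ.upperRatio_pos_s11 hs1).le (Nat.cast_nonneg N)

lemma exists_rpow_lt_lowerRatio (hφ : ClassV φ) {δ : ℝ} (hδ : δ < betaV φ) :
    ∃ t, 1 < t ∧ t ^ δ < lowerRatio φ t := by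
  obtain ⟨_, ⟨t, ht, rfl⟩, hlt⟩ := exists_lt_of_lt_csSup (by exact ⟨_, 2, one_lt_two, rfl⟩) hδ
  refine ⟨t, ht, ?_⟩
  rw [lt_div_iff₀ (Real.log_pos ht)] at hlt
  rw [← Real.exp_log (hφ.lower_pos t ht.le), Real.rpow_def_of_pos (by linarith)]
  exact Real.exp_lt_exp.2 (by linarith)

lemma exists_pow_mem_Icc_and_le_mul (hφ : ClassV φ) {t K x : ℝ} (ht : 1 < t)
    (hK : ∀ u ∈ Icc t (t ^ 2), upperRatio φ u ≤ K) (hx : 1 ≤ x) :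
    ∃ n : ℕ, t ^ n ∈ Icc (t * x) (t ^ 2 * x) ∧ φ (t ^ n) ≤ K * φ x := by
  obtain ⟨n, hn, hn'⟩ := exists_nat_pow_near hx ht
  have hx0 : 0 < x := by linarith
  have ht0 : 0 < t := by linarith
  have hmem : t ^ (n + 2) ∈ Icc (t * x) (t ^ 2 * x) := by
    constructor
    · rw [pow_succ' t (n + 1)]
      exact mul_le_mul_of_nonneg_left hn'.le ht0.le
    · rw [pow_add, mul_comm]
      exact mul_le_mul_of_nonneg_left hn (by positivity)
  have hw : t ^ (n + 2) / x ∈ Icc t (t ^ 2) :=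
    ⟨(le_div_iff₀ hx0).2 hmem.1, (div_le_iff₀ hx0).2 hmem.2⟩
  refine ⟨n + 2, hmem, ?_⟩
  calc φ (t ^ (n + 2)) = φ (t ^ (n + 2) / x * x) := by rw [div_mul_cancel₀ _ hx0.ne']
    _ ≤ upperRatio φ (t ^ (n + 2) / x) * φ x := hφ.le_upperRatio_mul (ht.le.trans hw.1) hx
    _ ≤ K * φ x := mul_le_mul_of_nonneg_right (hK _ hw) (hφ.pos x hx).le

theorem exists_mul_rpow_le (hφ : ClassV φ) {δ : ℝ} (hδ : δ < betaV φ) :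
    ∃ c, 0 < c ∧ ∀ x, 1 ≤ x → c * x ^ δ ≤ φ x := by
  obtain ⟨t, ht, htδ⟩ := hφ.exists_rpow_lt_lowerRatio hδ
  obtain ⟨K, hK⟩ := hφ.exists_upperRatio_le_of_mem_Icc ht
  have ht0 : 0 < t := by linarith
  have hK0 : 0 < K := (hφ.upperRatio_pos_s11 ht.le).trans_le (hK t ⟨le_rfl, by nlinarith⟩)
  have hφ1 := hφ.pos 1 le_rfl
  refine ⟨φ 1 * (t ^ 2) ^ (-|δ|) / K, by positivity, fun x hx => ?_⟩
  have hx0 : 0 < x := by linarith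
  obtain ⟨n, hn, hφn⟩ := hφ.exists_pow_mem_Icc_and_le_mul ht hK hx
  have hw : t ^ n / x ∈ Icc 1 (t ^ 2) :=
    ⟨(le_div_iff₀ hx0).2 (by nlinarith [hn.1]), (div_le_iff₀ hx0).2 hn.2⟩
  have hwδ : (t ^ 2) ^ (-|δ|) ≤ (t ^ n / x) ^ δ :=
    (Real.rpow_le_rpow_of_nonpos (by linarith [hw.1]) hw.2 (by simp)).trans
      (Real.rpow_le_rpow_of_exponent_le hw.1 (neg_abs_le δ))
  rw [div_mul_eq_mul_div, div_le_iff₀ hK0]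
  calc φ 1 * (t ^ 2) ^ (-|δ|) * x ^ δ ≤ φ 1 * ((t ^ n / x) ^ δ * x ^ δ) := by
        rw [mul_assoc]
        gcongr
    _ = φ 1 * (t ^ δ) ^ n := by
        rw [Real.div_rpow (by positivity) hx0.le, div_mul_cancel₀ _ (by positivity),
          Real.rpow_pow_comm ht0.le]
    _ ≤ φ 1 * lowerRatio φ t ^ n := by gcongr
    _ ≤ φ (t ^ n) := by rw [mul_comm]; exact hφ.lowerRatio_pow_mul_le ht.le n
    _ ≤ φ x * K := by rw [mul_comm]; exact hφn

end ClassV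

lemma summable_two_rpow_mul_rpow_neg {φ : ℝ → ℝ} {c δ δ' ρ : ℝ} (hc : 0 < c) (hδ : δ < δ')
    (hρ : 0 < ρ) (hφ : ∀ x, 1 ≤ x → c * x ^ δ' ≤ φ x) :
    Summable fun k : ℕ => (2 : ℝ) ^ ((k : ℝ) * δ * ρ) * φ (2 ^ k) ^ (-ρ) := by
  have hpos (k : ℕ) : 0 < c * ((2 : ℝ) ^ k) ^ δ' := by positivity
  have hle (k : ℕ) := hφ (2 ^ k) (one_le_pow₀ one_le_two)
  refine Summable.of_nonneg_of_le (fun k => ?_) (fun k => ?_)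
    ((summable_geometric_of_lt_one (r := (2 : ℝ) ^ ((δ - δ') * ρ)) (by positivity)
      (Real.rpow_lt_one_of_one_lt_of_neg one_lt_two
        (mul_neg_of_neg_of_pos (sub_neg.2 hδ) hρ))).mul_left (c ^ (-ρ)))
  · exact mul_nonneg (by positivity) (Real.rpow_nonneg ((hpos k).trans_le (hle k)).le _)
  calc (2 : ℝ) ^ ((k : ℝ) * δ * ρ) * φ (2 ^ k) ^ (-ρ)
      ≤ (2 : ℝ) ^ ((k : ℝ) * δ * ρ) * (c * ((2 : ℝ) ^ k) ^ δ') ^ (-ρ) := by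
        exact mul_le_mul_of_nonneg_left
          (Real.rpow_le_rpow_of_nonpos (hpos k) (hle k) (by linarith)) (by positivity)
    _ = c ^ (-ρ) * ((2 : ℝ) ^ ((δ - δ') * ρ)) ^ k := by
        rw [Real.mul_rpow hc.le (by positivity), ← Real.rpow_natCast_mul zero_le_two,
          ← Real.rpow_mul zero_le_two, ← Real.rpow_mul_natCast zero_le_two, mul_left_comm,
          ← Real.rpow_add two_pos]
        ring_nf

/-- Let `ρ > 0`, `φ ∈ 𝒱` and `γ < β_φ + η`.  Then
`sup_{M ≥ 1} 2^{Mγρ} ∑_{m=0}^{M} 2^{-mγρ} 2^{-(M-m)ηρ} φ(2^{M-m})^{-ρ} < ∞`. -/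
theorem classV_sum_bound_beta (ρ : ℝ) (hρ : 0 < ρ) (φ : ℝ → ℝ) (hφ : ClassV φ)
    (γ η : ℝ) (hγ : γ < betaV φ + η) :
    ∃ C : ℝ, ∀ M : ℕ, 1 ≤ M →
      (2 : ℝ) ^ ((M : ℝ) * γ * ρ) *
        ∑ m ∈ Finset.range (M + 1),
          (2 : ℝ) ^ (-(m : ℝ) * γ * ρ) * (2 : ℝ) ^ (-((M - m : ℕ) : ℝ) * η * ρ) *
            φ ((2 : ℝ) ^ (M - m)) ^ (-ρ) ≤ C := by
  obtain ⟨δ', hδ', hδ'β⟩ := exists_between (show γ - η < betaV φ by linarith)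
  obtain ⟨c, hc, hφc⟩ := hφ.exists_mul_rpow_le hδ'β
  have hsum := summable_two_rpow_mul_rpow_neg hc hδ' hρ hφc
  refine ⟨∑' k : ℕ, (2 : ℝ) ^ ((k : ℝ) * (γ - η) * ρ) * φ (2 ^ k) ^ (-ρ), fun M _ => ?_⟩
  rw [two_rpow_mul_sum_range_eq M γ η ρ fun k => φ (2 ^ k) ^ (-ρ)]
  refine hsum.sum_le_tsum _ fun k _ => mul_nonneg (by positivity) (Real.rpow_nonneg ?_ _)
  exact (hφ.pos _ (one_le_pow₀ one_le_two)).le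
end

section
/- Let X and Y be Banach spaces and T : X → Y a bounded linear operator. Let f : ℕ → ℝ be a positive increasing function satisfying f(k) ∼ f(2k), i.e., there is a constant c₀ > 0 with f(2k) ≤ c₀ f(k) for all k. Then there is a constant C > 0 depending only on f such that for all n ∈ ℕ, sup_{k ≤ n} f(k) e_k(T) ≤ C · sup_{k ≤ n} f(k) d_k(T). -/
/-!
Let `s` be the right-hand supremum, so that `d_m(T) ≤ s / f m` for `m ≤ n`. One builds, by
induction on `j` with `2 ^ j ≤ n`, finite nets `A_j` of the image of the unit ball at scale
`3 s / f (2 ^ j)`: a subspace `N` of dimension `< 2 ^ (j + 1)` lies within `2 s / f (2 ^ (j + 1))`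
of that image, and the part of `N` near each point of `A_j` is a ball in a space of dimension
`< 2 ^ (j + 1)`, covered by `5 ^ (t * 2 ^ (j + 1))` balls of radius `s / f (2 ^ (j + 1))` once
`2 ^ t ≥ 6 c₀ + 4`. Thus `#A_j ≤ 2 ^ (6 t 2 ^ j)`, so `e_{6 t 2 ^ j + 1}(T) ≤ 3 s / f (2 ^ j)`.
Monotonicity of `e_k` and of `f`, with the doubling condition, spread this over all `k`.
-/

open scoped ENNReal

/-- The `k`-th entropy number of a bounded linear operator:
`e_k(T) = inf { ε > 0 : ∃ y₁, …, y_{2^{k-1}} ∈ Y, ∀ ‖x‖ ≤ 1, ∃ i, ‖T x - y_i‖ ≤ ε }`. -/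
noncomputable def entropyNumber {X Y : Type*} [NormedAddCommGroup X] [NormedAddCommGroup Y]
    [NormedSpace ℝ X] [NormedSpace ℝ Y] (T : X →L[ℝ] Y) (k : ℕ) : ℝ :=
  sInf {ε : ℝ | 0 < ε ∧ ∃ y : Fin (2 ^ (k - 1)) → Y,
    ∀ x : X, ‖x‖ ≤ 1 → ∃ i, ‖T x - y i‖ ≤ ε}

/-- The `k`-th Kolmogorov number of a bounded linear operator:
`d_k(T) = inf { sup_{‖x‖ ≤ 1} dist(T x, N) : N subspace of Y, dim N < k }`. -/
noncomputable def kolmogorovNumber {X Y : Type*} [NormedAddCommGroup X] [NormedAddCommGroup Y]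
    [NormedSpace ℝ X] [NormedSpace ℝ Y] (T : X →L[ℝ] Y) (k : ℕ) : ℝ :=
  sInf {r : ℝ | ∃ N : Submodule ℝ Y, Module.rank ℝ N < k ∧
    r = sSup {c : ℝ | ∃ x : X, ‖x‖ ≤ 1 ∧ c = Metric.infDist (T x) (N : Set Y)}}

open Metric Module Finset
open scoped NNReal

section FiniteDimensionalCovers

variable {E : Type*} [NormedAddCommGroup E] [NormedSpace ℝ E] [FiniteDimensional ℝ E]

theorem Finset.card_le_five_pow_finrank_of_isSeparated {ε : ℝ≥0} (hε : 0 < ε) {s : Finset E}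
    {c : E} (hs : (s : Set E) ⊆ closedBall c (2 * ε)) (hsep : IsSeparated ε (s : Set E)) :
    #s ≤ 5 ^ finrank ℝ E := by
  classical
  have hε' : (0 : ℝ) < ε := hε
  set φ : E → E := fun x => (ε : ℝ)⁻¹ • (x - c)
  have hφ : ∀ x y, ‖φ x - φ y‖ = (ε : ℝ)⁻¹ * dist x y := fun x y => by
    simp [φ, ← smul_sub, norm_smul, dist_eq_norm]
  have hinj : Function.Injective φ :=
    (smul_right_injective E (inv_ne_zero hε'.ne')).comp (sub_left_injective (b := c))
  rw [← card_image_of_injective s hinj]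
  refine Besicovitch.card_le_of_separated _ (fun _ hu => ?_) (fun _ hu _ hv hne => ?_)
  · obtain ⟨x, hx, rfl⟩ := mem_image.1 hu
    have h := mem_closedBall.1 (hs hx)
    calc ‖φ x‖ = (ε : ℝ)⁻¹ * dist x c := by simp [φ, norm_smul, dist_eq_norm]
      _ ≤ 2 := by rw [inv_mul_le_iff₀ hε']; linarith
  · obtain ⟨x, hx, rfl⟩ := mem_image.1 hu
    obtain ⟨y, hy, rfl⟩ := mem_image.1 hv
    have h : (ε : ℝ≥0∞) < edist x y := hsep hx hy (fun h => hne (h ▸ rfl))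
    rw [edist_nndist, ENNReal.coe_lt_coe, ← NNReal.coe_lt_coe, coe_nndist] at h
    rw [hφ, le_inv_mul_iff₀ hε', mul_one]
    exact h.le

theorem Metric.packingNumber_le_five_pow_finrank {ε : ℝ≥0} (hε : 0 < ε) {A : Set E} {c : E}
    (hA : A ⊆ closedBall c (2 * ε)) : packingNumber ε A ≤ 5 ^ finrank ℝ E := by
  refine iSup₂_le fun C hCA => iSup_le fun hC => ?_
  by_contra! hlt
  obtain ⟨D, hDC, hD⟩ := Set.exists_subset_encard_eq (k := (5 ^ finrank ℝ E + 1 : ℕ))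
    (by exact_mod_cast Order.add_one_le_of_lt hlt)
  have hDfin : D.Finite := Set.finite_of_encard_eq_coe hD
  have := hDfin.toFinset.card_le_five_pow_finrank_of_isSeparated hε
    (by simpa using hDC.trans (hCA.trans hA)) (by simpa using hC.subset hDC)
  rw [← Set.ncard_eq_toFinset_card _ hDfin, Set.ncard_def, hD, ENat.toNat_natCast] at this
  omega

theorem Metric.exists_finset_card_le_five_pow_subset_iUnion_closedBall {r : ℝ} (hr : 0 < r)
    {A : Set E} {c : E} (hA : A ⊆ closedBall c (2 * r)) :
    ∃ F : Finset E, #F ≤ 5 ^ finrank ℝ E ∧ A ⊆ ⋃ y ∈ F, closedBall y r := by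
  lift r to ℝ≥0 using hr.le
  have hcov := (coveringNumber_le_packingNumber r A).trans
    (packingNumber_le_five_pow_finrank (by exact_mod_cast hr) hA)
  have hne : coveringNumber r A ≠ ⊤ := ne_top_of_le_ne_top (by simp) hcov
  have hfin : (minimalCover r A).Finite := finite_minimalCover
  refine ⟨hfin.toFinset, ?_, ?_⟩
  · rw [← Set.ncard_eq_toFinset_card _ hfin, Set.ncard_def, encard_minimalCover hne]
    exact ENat.toNat_le_of_le_natCast hcov
  · simpa using (isCover_minimalCover hne).subset_iUnion_closedBall

theorem Metric.exists_finset_card_le_five_pow_mul_subset_iUnion_closedBall (t : ℕ) {r : ℝ}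
    (hr : 0 < r) {A : Set E} {c : E} (hA : A ⊆ closedBall c (2 ^ t * r)) :
    ∃ F : Finset E, #F ≤ 5 ^ (t * finrank ℝ E) ∧ A ⊆ ⋃ y ∈ F, closedBall y r := by
  classical
  induction t generalizing r with
  | zero => exact ⟨{c}, by simp, by simpa using hA⟩
  | succ t ih =>
    obtain ⟨F, hFcard, hFcov⟩ := ih (by positivity : 0 < 2 * r)
      (hA.trans_eq (by rw [pow_succ, mul_assoc]))
    choose G hGcard hGcov using fun y : E =>
      exists_finset_card_le_five_pow_subset_iUnion_closedBall hr
        (Set.inter_subset_right (s := A) (t := closedBall y (2 * r)))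
    refine ⟨F.biUnion G, ?_, fun a ha => ?_⟩
    · calc #(F.biUnion G) ≤ #F * 5 ^ finrank ℝ E :=
            card_biUnion_le_card_mul _ _ _ fun y _ => hGcard y
        _ ≤ 5 ^ (t * finrank ℝ E) * 5 ^ finrank ℝ E := by gcongr
        _ = 5 ^ ((t + 1) * finrank ℝ E) := by rw [← pow_add, add_mul, one_mul]
    · obtain ⟨y, hy, hay⟩ := Set.mem_iUnion₂.1 (hFcov ha)
      obtain ⟨z, hz, haz⟩ := Set.mem_iUnion₂.1 (hGcov y ⟨ha, hay⟩)
      exact Set.mem_iUnion₂.2 ⟨z, mem_biUnion.2 ⟨y, hy, hz⟩, haz⟩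

theorem Submodule.exists_finset_card_le_five_pow_mul_subset_iUnion_closedBall
    {Y : Type*} [NormedAddCommGroup Y] [NormedSpace ℝ Y] (N : Submodule ℝ Y)
    [FiniteDimensional ℝ N] (t : ℕ) {r : ℝ} (hr : 0 < r) {A : Set Y} (hAN : A ⊆ N)
    {c : Y} (hc : c ∈ N) (hA : A ⊆ closedBall c (2 ^ t * r)) :
    ∃ F : Finset Y, #F ≤ 5 ^ (t * finrank ℝ N) ∧ A ⊆ ⋃ y ∈ F, closedBall y r := by
  obtain ⟨F, hFcard, hFcov⟩ :=
    Metric.exists_finset_card_le_five_pow_mul_subset_iUnion_closedBall t hr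
    (A := Subtype.val ⁻¹' A) (c := ⟨c, hc⟩) fun y hy => hA hy
  refine ⟨F.map (Function.Embedding.subtype _), by simpa using hFcard, fun a ha => ?_⟩
  obtain ⟨z, hz, haz⟩ := Set.mem_iUnion₂.1 (hFcov (a := ⟨a, hAN ha⟩) ha)
  exact Set.mem_iUnion₂.2 ⟨z, Finset.mem_map_of_mem _ hz, haz⟩

end FiniteDimensionalCovers

section OperatorNumbers

variable {X Y : Type*} [NormedAddCommGroup X] [NormedAddCommGroup Y] [NormedSpace ℝ X]
  [NormedSpace ℝ Y] (T : X →L[ℝ] Y)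

theorem entropyNumber_nonneg (k : ℕ) : 0 ≤ entropyNumber T k :=
  Real.sInf_nonneg fun _ hε => hε.1.le

theorem entropyNumber_le_of_cover {m k : ℕ} (hm : m ≤ 2 ^ (k - 1)) {ε : ℝ} (hε : 0 < ε)
    (y : Fin m → Y) (hy : ∀ x : X, ‖x‖ ≤ 1 → ∃ i, ‖T x - y i‖ ≤ ε) :
    entropyNumber T k ≤ ε := by
  refine csInf_le ⟨0, fun _ h => h.1.le⟩
    ⟨hε, fun j => if h : (j : ℕ) < m then y ⟨j, h⟩ else 0, fun x hx => ?_⟩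
  obtain ⟨i, hi⟩ := hy x hx
  exact ⟨Fin.castLE hm i, by simpa using hi⟩

theorem entropyNumber_le_of_finset {k : ℕ} {ε : ℝ} (hε : 0 < ε) (A : Finset Y)
    (hA : #A ≤ 2 ^ (k - 1)) (hcov : ∀ x : X, ‖x‖ ≤ 1 → ∃ a ∈ A, ‖T x - a‖ ≤ ε) :
    entropyNumber T k ≤ ε := by
  refine entropyNumber_le_of_cover T hA hε (fun i => A.equivFin.symm i) fun x hx => ?_
  obtain ⟨a, ha, hxa⟩ := hcov x hx
  exact ⟨A.equivFin ⟨a, ha⟩, by simpa using hxa⟩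

theorem entropyNumber_le_opNorm (k : ℕ) : entropyNumber T k ≤ ‖T‖ :=
  le_of_forall_pos_le_add fun δ hδ =>
    entropyNumber_le_of_cover T (m := 1) Nat.one_le_two_pow (by positivity) 0 fun x hx =>
      ⟨0, by simpa using (T.unit_le_opNorm x hx).trans (le_add_of_nonneg_right hδ.le)⟩

theorem entropyNumber_antitone : Antitone (entropyNumber T) := by
  intro k k' hkk'
  refine le_csInf ⟨‖T‖ + 1, by positivity, fun _ => 0, fun x hx => ⟨0, ?_⟩⟩ ?_
  · simpa using (T.unit_le_opNorm x hx).trans (le_add_of_nonneg_right zero_le_one)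
  · rintro ε ⟨hε, y, hy⟩
    exact entropyNumber_le_of_cover T (Nat.pow_le_pow_right two_pos (by omega)) hε y hy

theorem kolmogorovNumber_nonneg (k : ℕ) : 0 ≤ kolmogorovNumber T k := by
  refine Real.sInf_nonneg ?_
  rintro _ ⟨N, -, rfl⟩
  exact Real.sSup_nonneg (by rintro _ ⟨x, -, rfl⟩; exact infDist_nonneg)

theorem bddAbove_infDist_apply_submodule (N : Submodule ℝ Y) :
    BddAbove {c : ℝ | ∃ x : X, ‖x‖ ≤ 1 ∧ c = infDist (T x) (N : Set Y)} := by
  refine ⟨‖T‖, ?_⟩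
  rintro _ ⟨x, hx, rfl⟩
  calc infDist (T x) N ≤ dist (T x) 0 := infDist_le_dist_of_mem N.zero_mem
    _ ≤ ‖T‖ := by simpa using T.unit_le_opNorm x hx

theorem opNorm_le_kolmogorovNumber_one : ‖T‖ ≤ kolmogorovNumber T 1 := by
  refine le_csInf ⟨_, ⊥, by simp, rfl⟩ ?_
  rintro _ ⟨N, hN, rfl⟩
  obtain rfl : N = ⊥ := Submodule.rank_eq_zero.1 (by simpa using hN)
  refine T.opNorm_le_of_unit_norm (Real.sSup_nonneg ?_) fun x hx => ?_
  · rintro _ ⟨x, -, rfl⟩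
    exact infDist_nonneg
  · refine le_csSup (bddAbove_infDist_apply_submodule T ⊥) ⟨x, hx.le, ?_⟩
    simp

theorem exists_submodule_finrank_lt_of_kolmogorovNumber_lt {k : ℕ} (hk : 0 < k) {a : ℝ}
    (ha : kolmogorovNumber T k < a) :
    ∃ N : Submodule ℝ Y, FiniteDimensional ℝ N ∧ finrank ℝ N < k ∧
      ∀ x : X, ‖x‖ ≤ 1 → ∃ z ∈ N, dist (T x) z < a := by
  obtain ⟨_, ⟨N, hN, rfl⟩, hNa⟩ :=
    exists_lt_of_csInf_lt (by exact ⟨_, ⊥, by simpa using hk, rfl⟩) ha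
  refine ⟨N, Module.rank_lt_aleph0_iff.1 (hN.trans Cardinal.natCast_lt_aleph0),
    finrank_lt_of_rank_lt hN, fun x hx => ?_⟩
  refine (infDist_lt_iff ⟨0, N.zero_mem⟩).1 (lt_of_le_of_lt ?_ hNa)
  exact le_csSup (bddAbove_infDist_apply_submodule T N) ⟨x, hx, rfl⟩

end OperatorNumbers

theorem exists_finset_refine_cover {Y : Type*} [NormedAddCommGroup Y] [NormedSpace ℝ Y]
    {S : Set Y} {A : Finset Y} {ρ δ r : ℝ} (hr : 0 < r) (t : ℕ)
    (hρδ : 2 * (ρ + δ) ≤ 2 ^ t * r)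
    (hA : ∀ y ∈ S, ∃ a ∈ A, dist y a ≤ ρ) (N : Submodule ℝ Y) [FiniteDimensional ℝ N]
    (hN : ∀ y ∈ S, ∃ z ∈ N, dist y z < δ) :
    ∃ A' : Finset Y, #A' ≤ #A * 5 ^ (t * finrank ℝ N) ∧
      ∀ y ∈ S, ∃ a ∈ A', dist y a ≤ δ + r := by
  classical
  have hpiece : ∀ a : Y, ∃ F : Finset Y, #F ≤ 5 ^ (t * finrank ℝ N) ∧
      (N : Set Y) ∩ closedBall a (ρ + δ) ⊆ ⋃ z ∈ F, closedBall z r := by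
    intro a
    rcases ((N : Set Y) ∩ closedBall a (ρ + δ)).eq_empty_or_nonempty with h | ⟨z₀, hz₀N, hz₀⟩
    · exact ⟨∅, by simp, by simp [h]⟩
    · refine N.exists_finset_card_le_five_pow_mul_subset_iUnion_closedBall t hr
        Set.inter_subset_left hz₀N fun w ⟨_, hw⟩ => ?_
      rw [mem_closedBall] at hw hz₀ ⊢
      linarith [dist_triangle_right w z₀ a]
  choose F hFcard hFcov using hpiece
  refine ⟨A.biUnion F, card_biUnion_le_card_mul _ _ _ fun a _ => hFcard a, fun y hy => ?_⟩
  obtain ⟨a, ha, hya⟩ := hA y hy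
  obtain ⟨z, hzN, hyz⟩ := hN y hy
  have hz : z ∈ (N : Set Y) ∩ closedBall a (ρ + δ) :=
    ⟨hzN, mem_closedBall.2 (by linarith [dist_triangle_left z a y])⟩
  obtain ⟨w, hw, hzw⟩ := Set.mem_iUnion₂.1 (hFcov a hz)
  exact ⟨w, mem_biUnion.2 ⟨a, ha, hw⟩,
    by linarith [dist_triangle y z w, mem_closedBall.1 hzw]⟩

section DyadicCovers

variable {X Y : Type*} [NormedAddCommGroup X] [NormedAddCommGroup Y] [NormedSpace ℝ X]
  [NormedSpace ℝ Y] (T : X →L[ℝ] Y) {ε : ℕ → ℝ} {c : ℝ} {t : ℕ}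

theorem exists_finset_dyadic_cover (hε : ∀ j, 0 < ε j) (hdecay : ∀ j, ε j ≤ c * ε (j + 1))
    (ht : 6 * c + 4 ≤ 2 ^ t) (J : ℕ) (hd : ∀ j ≤ J, kolmogorovNumber T (2 ^ j) ≤ ε j) :
    ∃ A : Finset Y, #A ≤ 5 ^ (t * 2 ^ (J + 1)) ∧
      ∀ x : X, ‖x‖ ≤ 1 → ∃ a ∈ A, dist (T x) a ≤ 3 * ε J := by
  induction J with
  | zero =>
    refine ⟨{0}, by simp [Nat.one_le_pow], fun x hx => ⟨0, mem_singleton_self 0, ?_⟩⟩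
    calc dist (T x) 0 = ‖T x‖ := dist_zero_right _
      _ ≤ ‖T‖ := T.unit_le_opNorm x hx
      _ ≤ kolmogorovNumber T 1 := opNorm_le_kolmogorovNumber_one T
      _ ≤ ε 0 := hd 0 le_rfl
      _ ≤ 3 * ε 0 := by linarith [hε 0]
  | succ J ih =>
    obtain ⟨A, hAcard, hAcov⟩ := ih fun j hj => hd j (by omega)
    obtain ⟨N, _, hNrank, hN⟩ := exists_submodule_finrank_lt_of_kolmogorovNumber_lt T
      (Nat.two_pow_pos _) (a := 2 * ε (J + 1)) (by linarith [hd (J + 1) le_rfl, hε (J + 1)])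
    have hρδ : 2 * (3 * ε J + 2 * ε (J + 1)) ≤ 2 ^ t * ε (J + 1) := by
      nlinarith [hdecay J, mul_le_mul_of_nonneg_right ht (hε (J + 1)).le]
    obtain ⟨A', hA'card, hA'cov⟩ := exists_finset_refine_cover (S := T '' closedBall 0 1)
      (hε (J + 1)) t hρδ
      (Set.forall_mem_image.2 fun x hx => hAcov x (mem_closedBall_zero_iff.1 hx)) N
      (Set.forall_mem_image.2 fun x hx => hN x (mem_closedBall_zero_iff.1 hx))
    refine ⟨A', ?_, fun x hx => ?_⟩
    · calc #A' ≤ #A * 5 ^ (t * finrank ℝ N) := hA'card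
        _ ≤ 5 ^ (t * 2 ^ (J + 1)) * 5 ^ (t * 2 ^ (J + 1)) :=
          Nat.mul_le_mul hAcard
            (Nat.pow_le_pow_right (by norm_num) (Nat.mul_le_mul_left t hNrank.le))
        _ = 5 ^ (t * 2 ^ (J + 1 + 1)) := by rw [← pow_add]; ring
    · obtain ⟨a, ha, hxa⟩ :=
        hA'cov (T x) (Set.mem_image_of_mem T (mem_closedBall_zero_iff.2 hx))
      exact ⟨a, ha, by linarith⟩

theorem entropyNumber_dyadic_le (hε : ∀ j, 0 < ε j) (hdecay : ∀ j, ε j ≤ c * ε (j + 1))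
    (ht : 6 * c + 4 ≤ 2 ^ t) (J : ℕ) (hd : ∀ j ≤ J, kolmogorovNumber T (2 ^ j) ≤ ε j) :
    entropyNumber T (6 * t * 2 ^ J + 1) ≤ 3 * ε J := by
  obtain ⟨A, hAcard, hAcov⟩ := exists_finset_dyadic_cover T hε hdecay ht J hd
  refine entropyNumber_le_of_finset T (by linarith [hε J]) A ?_ fun x hx => ?_
  · calc #A ≤ 5 ^ (t * 2 ^ (J + 1)) := hAcard
      _ ≤ (2 ^ 3) ^ (t * 2 ^ (J + 1)) := Nat.pow_le_pow_left (by norm_num) _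
      _ = 2 ^ (6 * t * 2 ^ J + 1 - 1) := by rw [← pow_mul, Nat.add_sub_cancel]; ring_nf
  · simpa [dist_eq_norm] using hAcov x hx

end DyadicCovers

theorem Nat.exists_mul_two_pow_lt_le {b k : ℕ} (hb : 0 < b) (hbk : b < k) :
    ∃ J, b * 2 ^ J < k ∧ k ≤ b * 2 ^ (J + 1) := by
  have hlt := Nat.lt_mul_div_succ (k - 1) hb
  set q := (k - 1) / b
  have hq : q ≠ 0 := (Nat.div_pos (by omega) hb).ne'
  refine ⟨Nat.log 2 q, ?_, ?_⟩
  · calc b * 2 ^ Nat.log 2 q ≤ b * q := Nat.mul_le_mul_left b (Nat.pow_log_le_self 2 hq)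
      _ ≤ k - 1 := Nat.mul_div_le (k - 1) b
      _ < k := by omega
  · calc k ≤ b * (q + 1) := by omega
      _ ≤ b * 2 ^ (Nat.log 2 q + 1) :=
        Nat.mul_le_mul_left b (Nat.lt_pow_succ_log_self one_lt_two q)

theorem le_pow_mul_of_doubling {f : ℕ → ℝ} {c : ℝ} (hc : 0 ≤ c)
    (hdouble : ∀ k, f (2 * k) ≤ c * f k) (m k : ℕ) : f (2 ^ m * k) ≤ c ^ m * f k := by
  induction m with
  | zero => simp
  | succ m ih =>
    calc f (2 ^ (m + 1) * k) = f (2 * (2 ^ m * k)) := by rw [pow_succ', mul_assoc]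
      _ ≤ c * f (2 ^ m * k) := hdouble _
      _ ≤ c * (c ^ m * f k) := by gcongr
      _ = c ^ (m + 1) * f k := by ring

section Doubling

variable {X Y : Type*} [NormedAddCommGroup X] [NormedAddCommGroup Y] [NormedSpace ℝ X]
  [NormedSpace ℝ Y] (T : X →L[ℝ] Y) {f : ℕ → ℝ} {c : ℝ} {t n : ℕ} {s : ℝ}

theorem entropyNumber_dyadic_le_div (hf_pos : ∀ k, 0 < f k)
    (hdouble : ∀ k, f (2 * k) ≤ c * f k) (ht : 6 * c + 4 ≤ 2 ^ t) (hs : 0 < s)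
    (hd : ∀ m ∈ Icc 1 n, f m * kolmogorovNumber T m ≤ s) {J : ℕ} (hJ : 2 ^ J ≤ n) :
    entropyNumber T (6 * t * 2 ^ J + 1) ≤ 3 * (s / f (2 ^ J)) := by
  refine entropyNumber_dyadic_le T (ε := fun j => s / f (2 ^ j)) (fun j => div_pos hs (hf_pos _))
    (fun j => ?_) ht J fun j hj => ?_
  · have h := hdouble (2 ^ j)
    rw [← pow_succ'] at h
    rw [mul_div_assoc', div_le_div_iff₀ (hf_pos _) (hf_pos _)]
    nlinarith
  · have hj : 2 ^ j ∈ Icc 1 n :=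
      mem_Icc.2 ⟨Nat.one_le_two_pow, (Nat.pow_le_pow_right two_pos hj).trans hJ⟩
    rw [le_div_iff₀' (hf_pos _)]
    exact hd _ hj

theorem mul_entropyNumber_le (hf_pos : ∀ k, 0 < f k) (hf_mono : Monotone f) (hc : 0 ≤ c)
    (hdouble : ∀ k, f (2 * k) ≤ c * f k) (ht : 6 * c + 4 ≤ 2 ^ t) (hs : 0 < s)
    (hd : ∀ m ∈ Icc 1 n, f m * kolmogorovNumber T m ≤ s) {k : ℕ} (hk : k ∈ Icc 1 n) :
    f k * entropyNumber T k ≤ max (f (6 * t) / f 1) (3 * c ^ (6 * t + 1)) * s := by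
  obtain ⟨hk1, hkn⟩ := mem_Icc.1 hk
  rcases le_or_gt k (6 * t) with hkb | hkb
  · have hT : ‖T‖ ≤ s / f 1 := by
      rw [le_div_iff₀' (hf_pos 1)]
      exact (mul_le_mul_of_nonneg_left (opNorm_le_kolmogorovNumber_one T) (hf_pos 1).le).trans
        (hd 1 (mem_Icc.2 ⟨le_rfl, hk1.trans hkn⟩))
    calc f k * entropyNumber T k ≤ f (6 * t) * (s / f 1) :=
          mul_le_mul (hf_mono hkb) ((entropyNumber_le_opNorm T k).trans hT)
            (entropyNumber_nonneg T k) (hf_pos _).le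
      _ = f (6 * t) / f 1 * s := by ring
      _ ≤ _ := by gcongr; exact le_max_left _ _
  · have ht0 : 0 < t := Nat.pos_of_ne_zero (by rintro rfl; norm_num at ht; linarith)
    obtain ⟨J, hJk, hkJ⟩ := Nat.exists_mul_two_pow_lt_le (by omega) hkb
    have he : entropyNumber T k ≤ 3 * (s / f (2 ^ J)) :=
      (entropyNumber_antitone T hJk).trans
        (entropyNumber_dyadic_le_div T hf_pos hdouble ht hs hd (by nlinarith))
    have hfk : f k ≤ c ^ (6 * t + 1) * f (2 ^ J) := by
      refine (hf_mono ?_).trans (le_pow_mul_of_doubling hc hdouble _ _)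
      calc k ≤ 6 * t * 2 ^ (J + 1) := hkJ
        _ ≤ 2 ^ (6 * t) * 2 ^ (J + 1) := by gcongr; exact Nat.lt_two_pow_self.le
        _ = 2 ^ (6 * t + 1) * 2 ^ J := by ring
    calc f k * entropyNumber T k ≤ c ^ (6 * t + 1) * f (2 ^ J) * (3 * (s / f (2 ^ J))) :=
          mul_le_mul hfk he (entropyNumber_nonneg T k) (mul_nonneg (pow_nonneg hc _) (hf_pos _).le)
      _ = 3 * c ^ (6 * t + 1) * s := by field_simp [(hf_pos (2 ^ J)).ne']
      _ ≤ _ := by gcongr; exact le_max_right _ _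

end Doubling

theorem entropy_kolmogorov_sup_inequality_general
    {X Y : Type*} [NormedAddCommGroup X] [NormedAddCommGroup Y]
    [NormedSpace ℝ X] [NormedSpace ℝ Y]
    (f : ℕ → ℝ) (hf_pos : ∀ k, 0 < f k) (hf_mono : Monotone f)
    (hf_double : ∃ c₀ : ℝ, 0 < c₀ ∧ ∀ k, f (2 * k) ≤ c₀ * f k) :
    ∃ C : ℝ, 0 < C ∧ ∀ T : X →L[ℝ] Y, ∀ n : ℕ, (hn : 1 ≤ n) →
      (Finset.Icc 1 n).sup' (Finset.nonempty_Icc.mpr hn) (fun k => f k * entropyNumber T k)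
        ≤ C * (Finset.Icc 1 n).sup' (Finset.nonempty_Icc.mpr hn)
            (fun k => f k * kolmogorovNumber T k) := by
  obtain ⟨c₀, hc₀, hdouble⟩ := hf_double
  obtain ⟨t, ht⟩ := pow_unbounded_of_one_lt (6 * c₀ + 4) (one_lt_two (α := ℝ))
  have hC : 0 < max (f (6 * t) / f 1) (3 * c₀ ^ (6 * t + 1)) :=
    lt_max_of_lt_left (div_pos (hf_pos _) (hf_pos _))
  refine ⟨_, hC, fun T n hn => sup'_le _ _ fun k hk => ?_⟩
  set s := (Icc 1 n).sup' (nonempty_Icc.mpr hn) fun k => f k * kolmogorovNumber T k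
  have hs : 0 ≤ s := (mul_nonneg (hf_pos 1).le (kolmogorovNumber_nonneg T 1)).trans
    (le_sup' (fun k => f k * kolmogorovNumber T k) (mem_Icc.2 ⟨le_rfl, hn⟩))
  -- `s` may vanish, so the bound is proved for every larger value
  refine le_of_forall_gt_imp_ge_of_dense fun u hu => ?_
  have hsu : s < u / _ := (lt_div_iff₀' hC).2 hu
  calc f k * entropyNumber T k ≤ _ * (u / _) :=
        mul_entropyNumber_le T hf_pos hf_mono hc₀.le hdouble ht.le (hs.trans_lt hsu)
          (fun m hm => (le_sup' (fun k => f k * kolmogorovNumber T k) hm).trans hsu.le) hk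
    _ = u := mul_div_cancel₀ _ hC.ne'

/-- Carl-type inequality relating entropy and Kolmogorov numbers: for a positive
increasing `f` with `f(2k) ≲ f(k)` there is `C > 0`, depending only on `f`, with
`sup_{k ≤ n} f(k) e_k(T) ≤ C sup_{k ≤ n} f(k) d_k(T)` for all `n`. -/
theorem entropy_kolmogorov_sup_inequality
    {X Y : Type*} [NormedAddCommGroup X] [NormedAddCommGroup Y]
    [NormedSpace ℝ X] [NormedSpace ℝ Y] [CompleteSpace X] [CompleteSpace Y]
    (f : ℕ → ℝ) (hf_pos : ∀ k, 0 < f k) (hf_mono : Monotone f)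
    (hf_double : ∃ c₀ : ℝ, 0 < c₀ ∧ ∀ k, f (2 * k) ≤ c₀ * f k) :
    ∃ C : ℝ, 0 < C ∧ ∀ T : X →L[ℝ] Y, ∀ n : ℕ, (hn : 1 ≤ n) →
      (Finset.Icc 1 n).sup' (Finset.nonempty_Icc.mpr hn) (fun k => f k * entropyNumber T k)
        ≤ C * (Finset.Icc 1 n).sup' (Finset.nonempty_Icc.mpr hn)
            (fun k => f k * kolmogorovNumber T k) :=
  entropy_kolmogorov_sup_inequality_general f hf_pos hf_mono hf_double
end
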